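/- arXiv:1606.00871 — 5 statements merged into one kernel-verified Lean document; each statement's English description precedes it below -/
import Mathlib

section
/- Let φ : ℝ → ℝ be C² with φ'(z₀) = 0 and 1 ≤ φ''(z) ≤ C for all z, and let a : ℝ → ℂ be C¹ with compact support. Then for all t ≠ 0, |∫ℝ e^{−itφ(z)} a(z) dz| ≲ ∫_{|z−z₀|<|t|^{−1/2}} |a(z)| dz + |t|^{−1} ∫_{|z−z₀|>|t|^{−1/2}} ( |a(z)|/|z−z₀|² + |a'(z)|/|z−z₀| ) dz, with implicit constant depending only on C. -/
/-!
Write `ψ = φ'` and `w z = ‖a z‖ / |z - z₀|² + ‖a' z‖ / |z - z₀|`. Since `ψ' ≥ 1` and `ψ z₀ = 0`,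
`|ψ z| ≥ |z - z₀|`. Fix any `r > 0` and split `ℝ` at `z₀ ± r`. Near `z₀` the integrand is bounded
by `‖a‖`. On each far half-line integrate by parts once, writing `e^{-itφ} = (e^{-itφ})' / (-itψ)`:
the remaining integral is `|t|⁻¹ ∫ (‖a'‖ / |ψ| + ‖a‖ |ψ'| / ψ²) ≤ C |t|⁻¹ ∫ w`, and the boundary
term `‖a (z₀ ± r)‖ / (|t| r)` is controlled by averaging over the adjacent window of length `r`,
where `r < |z - z₀| < 2r`: `r ‖a (z₀ ± r)‖ ≤ ∫ (‖a‖ + r ‖a'‖) ≤ 4 r² ∫ w`. This gives the bound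
with `K = C + 4` for every radius `r`; the statement takes `r = |t|^{-1/2}`.
-/

open MeasureTheory Real Set

theorem norm_quotient_rule_le {𝕜 : Type*} [NormedField 𝕜] (p q d d' : 𝕜) :
    ‖(p * d - q * d') / d ^ 2‖ ≤ ‖p‖ / ‖d‖ + ‖q‖ * ‖d'‖ / ‖d‖ ^ 2 := by
  rcases eq_or_ne d 0 with rfl | hd
  · simp
  calc ‖(p * d - q * d') / d ^ 2‖ ≤ (‖p‖ * ‖d‖ + ‖q‖ * ‖d'‖) / ‖d‖ ^ 2 := by
        rw [norm_div, norm_pow, ← norm_mul, ← norm_mul]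
        gcongr
        exact norm_sub_le _ _
    _ = ‖p‖ / ‖d‖ + ‖q‖ * ‖d'‖ / ‖d‖ ^ 2 := by
        rw [add_div, sq, mul_div_mul_right _ _ (norm_ne_zero_iff.2 hd)]

theorem intervalIntegral_mul_eq_sub_integral_div {F D D' a a' : ℝ → ℂ} {u v : ℝ}
    (hF : ∀ x ∈ uIcc u v, HasDerivAt F (F x * D x) x)
    (hD : ∀ x ∈ uIcc u v, HasDerivAt D (D' x) x) (ha : ∀ x ∈ uIcc u v, HasDerivAt a (a' x) x)
    (hD₀ : ∀ x ∈ uIcc u v, D x ≠ 0) (hD' : ContinuousOn D' (uIcc u v))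
    (ha' : ContinuousOn a' (uIcc u v)) :
    ∫ x in u..v, F x * a x = a v / D v * F v - a u / D u * F u -
      ∫ x in u..v, (a' x * D x - a x * D' x) / D x ^ 2 * F x := by
  have hFc := HasDerivAt.continuousOn hF
  have hDc := HasDerivAt.continuousOn hD
  have hac := HasDerivAt.continuousOn ha
  have hibp := intervalIntegral.integral_mul_deriv_eq_deriv_mul
    (fun x hx => (ha x hx).div (hD x hx) (hD₀ x hx)) hF
    (ContinuousOn.intervalIntegrable (ContinuousOn.div (by fun_prop) (by fun_prop)
      fun x hx => pow_ne_zero _ (hD₀ x hx)))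
    (hFc.mul hDc).intervalIntegrable
  simp only [Pi.div_apply] at hibp
  rw [← hibp]
  refine intervalIntegral.integral_congr fun x hx => ?_
  field_simp [hD₀ x hx]

theorem norm_intervalIntegral_mul_le_of_hasDerivAt {F D D' a a' : ℝ → ℂ} {u v : ℝ}
    (huv : u ≤ v) (hF : ∀ x ∈ uIcc u v, HasDerivAt F (F x * D x) x)
    (hD : ∀ x ∈ uIcc u v, HasDerivAt D (D' x) x) (ha : ∀ x ∈ uIcc u v, HasDerivAt a (a' x) x)
    (hD₀ : ∀ x ∈ uIcc u v, D x ≠ 0) (hD' : ContinuousOn D' (uIcc u v))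
    (ha' : ContinuousOn a' (uIcc u v)) (hFn : ∀ x ∈ uIcc u v, ‖F x‖ = 1) :
    ‖∫ x in u..v, F x * a x‖ ≤ ‖a u‖ / ‖D u‖ + ‖a v‖ / ‖D v‖ +
      ∫ x in u..v, (‖a' x‖ / ‖D x‖ + ‖a x‖ * ‖D' x‖ / ‖D x‖ ^ 2) := by
  have hDc := HasDerivAt.continuousOn hD
  have hac := HasDerivAt.continuousOn ha
  have hbdry : ∀ x ∈ uIcc u v, ‖a x / D x * F x‖ = ‖a x‖ / ‖D x‖ := fun x hx => by
    rw [norm_mul, hFn x hx, mul_one, norm_div]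
  have hρ : ContinuousOn (fun x => ‖a' x‖ / ‖D x‖ + ‖a x‖ * ‖D' x‖ / ‖D x‖ ^ 2) (uIcc u v) :=
    (ContinuousOn.div (by fun_prop) (by fun_prop) fun x hx => norm_ne_zero_iff.2 (hD₀ x hx)).add
      (ContinuousOn.div (by fun_prop) (by fun_prop) fun x hx =>
        pow_ne_zero _ (norm_ne_zero_iff.2 (hD₀ x hx)))
  have hpt : ∀ x ∈ uIcc u v, ‖(a' x * D x - a x * D' x) / D x ^ 2 * F x‖ ≤
      ‖a' x‖ / ‖D x‖ + ‖a x‖ * ‖D' x‖ / ‖D x‖ ^ 2 := fun x hx => by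
    rw [norm_mul, hFn x hx, mul_one]
    exact norm_quotient_rule_le _ _ _ _
  have hrest := intervalIntegral.norm_integral_le_of_norm_le huv
    (ae_of_all _ fun x hx => hpt x (Ioc_subset_Icc_self.trans Icc_subset_uIcc hx))
    (hρ.intervalIntegrable (μ := volume))
  rw [intervalIntegral_mul_eq_sub_integral_div hF hD ha hD₀ hD' ha']
  grw [norm_sub_le, norm_sub_le, hrest, hbdry u left_mem_uIcc, hbdry v right_mem_uIcc]
  linarith

theorem norm_intervalIntegral_exp_mul_le {φ : ℝ → ℝ} {a : ℝ → ℂ} {t u v : ℝ}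
    (hφ : ContDiff ℝ 2 φ) (ha : ContDiff ℝ 1 a) (ht : t ≠ 0) (huv : u ≤ v)
    (hψ : ∀ x ∈ Icc u v, deriv φ x ≠ 0) :
    ‖∫ x in u..v, Complex.exp (-Complex.I * t * φ x) * a x‖ ≤
      |t|⁻¹ * (‖a u‖ / |deriv φ u| + ‖a v‖ / |deriv φ v| + ∫ x in u..v,
        (‖deriv a x‖ / |deriv φ x| + ‖a x‖ * |deriv (deriv φ) x| / deriv φ x ^ 2)) := by
  have hψ1 : ContDiff ℝ 1 (deriv φ) := hφ.deriv'
  have hψ'c := hψ1.continuous_deriv le_rfl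
  have ha'c := ha.continuous_deriv le_rfl
  rw [← uIcc_of_le huv] at hψ
  have hbound := norm_intervalIntegral_mul_le_of_hasDerivAt huv
    (fun x _ => ((((hφ.differentiable two_ne_zero) x).hasDerivAt.ofReal_comp).const_mul
      (-Complex.I * t)).cexp)
    (fun x _ => (((hψ1.differentiable one_ne_zero) x).hasDerivAt.ofReal_comp).const_mul _)
    (fun x _ => ((ha.differentiable one_ne_zero) x).hasDerivAt)
    (fun x hx => by simp [ht, hψ x hx]) (by fun_prop) (by fun_prop)
    (fun x _ => by simp [Complex.norm_exp])
  simp only [norm_mul, norm_neg, Complex.norm_I, one_mul, Complex.norm_real,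
    Real.norm_eq_abs] at hbound
  refine hbound.trans_eq ?_
  rw [mul_add, mul_add, ← intervalIntegral.integral_const_mul]
  have ht' : |t| ≠ 0 := abs_ne_zero.2 ht
  congr 1
  · congr 1 <;> ring
  refine intervalIntegral.integral_congr fun x _ => ?_
  simp only [mul_pow, sq_abs]
  field_simp
  rw [sq_abs]
  ring

theorem norm_sub_le_setIntegral_norm_deriv {E : Type*} [NormedAddCommGroup E] [NormedSpace ℝ E]
    [CompleteSpace E] {a : ℝ → E} (ha : ContDiff ℝ 1 a) {u v x z : ℝ} (hx : x ∈ Icc u v)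
    (hz : z ∈ Icc u v) : ‖a x - a z‖ ≤ ∫ y in Ioo u v, ‖deriv a y‖ := by
  have ha' := ha.continuous_deriv le_rfl
  rw [← intervalIntegral.integral_deriv_eq_sub
      (fun y _ => (ha.differentiable one_ne_zero).differentiableAt) (ha'.intervalIntegrable _ _),
    ← integral_Ioc_eq_integral_Ioo]
  refine intervalIntegral.norm_integral_le_integral_norm_uIoc.trans
    (setIntegral_mono_set (ha'.norm.integrableOn_Icc.mono_set Ioc_subset_Icc_self)
      (ae_of_all _ fun _ => norm_nonneg _) ?_)
  rw [← uIoc_of_le (hx.1.trans hx.2)]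
  exact (uIoc_subset_uIoc_of_uIcc_subset_uIcc
    (uIcc_subset_uIcc (Icc_subset_uIcc hz) (Icc_subset_uIcc hx))).eventuallyLE

theorem mul_norm_le_setIntegral_Ioo {E : Type*} [NormedAddCommGroup E] [NormedSpace ℝ E]
    [CompleteSpace E] {a : ℝ → E} (ha : ContDiff ℝ 1 a) {u v x : ℝ} (hx : x ∈ Icc u v) :
    (v - u) * ‖a x‖ ≤ ∫ z in Ioo u v, (‖a z‖ + (v - u) * ‖deriv a z‖) := by
  have huv : u ≤ v := hx.1.trans hx.2
  set Q := ∫ y in Ioo u v, ‖deriv a y‖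
  have hQ : IntegrableOn (fun y => ‖deriv a y‖) (Ioo u v) :=
    (ha.continuous_deriv le_rfl).norm.integrableOn_Icc.mono_set Ioo_subset_Icc_self
  have ha_int : IntegrableOn (fun y => ‖a y‖) (Ioo u v) :=
    ha.continuous.norm.integrableOn_Icc.mono_set Ioo_subset_Icc_self
  have hconst : ∀ c : ℝ, IntegrableOn (fun _ => c) (Ioo u v) := fun c =>
    integrableOn_const measure_Ioo_lt_top.ne
  calc (v - u) * ‖a x‖ = ∫ _ in Ioo u v, ‖a x‖ := by
        rw [setIntegral_const, volume_real_Ioo_of_le huv, smul_eq_mul]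
    _ ≤ ∫ z in Ioo u v, (‖a z‖ + Q) :=
        setIntegral_mono_on (hconst _) (ha_int.add (hconst _)) measurableSet_Ioo fun z hz =>
          (norm_le_insert' (a x) (a z)).trans (add_le_add le_rfl
            (norm_sub_le_setIntegral_norm_deriv ha hx (Ioo_subset_Icc_self hz)))
    _ = ∫ z in Ioo u v, (‖a z‖ + (v - u) * ‖deriv a z‖) := by
        rw [integral_add ha_int (hconst _), integral_add ha_int (hQ.const_mul _),
          integral_const_mul, setIntegral_const, volume_real_Ioo_of_le huv, smul_eq_mul]

theorem abs_sub_le_abs_sub_of_one_le_deriv {f : ℝ → ℝ} (hf : Differentiable ℝ f)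
    (hf' : ∀ x, 1 ≤ deriv f x) (x y : ℝ) : |y - x| ≤ |f y - f x| := by
  rcases le_total x y with hxy | hyx
  · have := mul_sub_le_image_sub_of_le_deriv hf hf' hxy
    rw [abs_of_nonneg (sub_nonneg.2 hxy)]
    exact (one_mul (y - x) ▸ this).trans (le_abs_self _)
  · have := mul_sub_le_image_sub_of_le_deriv hf hf' hyx
    rw [abs_sub_comm, abs_sub_comm (f y), abs_of_nonneg (sub_nonneg.2 hyx)]
    exact (one_mul (x - y) ▸ this).trans (le_abs_self _)

theorem abs_sub_le_abs_deriv {φ : ℝ → ℝ} {z₀ : ℝ} (hφ : ContDiff ℝ 2 φ)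
    (hcrit : deriv φ z₀ = 0) (hφ'' : ∀ z, 1 ≤ deriv (deriv φ) z) (z : ℝ) :
    |z - z₀| ≤ |deriv φ z| := by
  simpa [hcrit] using abs_sub_le_abs_sub_of_one_le_deriv
    ((hφ.deriv' (n := 1)).differentiable one_ne_zero) hφ'' z₀ z

noncomputable def farWeight (a : ℝ → ℂ) (z₀ z : ℝ) : ℝ :=
  ‖a z‖ / |z - z₀| ^ 2 + ‖deriv a z‖ / |z - z₀|

theorem farWeight_nonneg (a : ℝ → ℂ) (z₀ z : ℝ) : 0 ≤ farWeight a z₀ z := by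
  unfold farWeight; positivity

theorem integrableOn_farWeight {a : ℝ → ℂ} (ha : ContDiff ℝ 1 a) (hsupp : HasCompactSupport a)
    (z₀ : ℝ) {r : ℝ} (hr : 0 < r) : IntegrableOn (farWeight a z₀) {z | r < |z - z₀|} := by
  have ha' := ha.continuous_deriv le_rfl
  have hdom : Integrable fun z => ‖a z‖ / r ^ 2 + ‖deriv a z‖ / r :=
    ((ha.continuous.norm.integrable_of_hasCompactSupport hsupp.norm).div_const _).add
      ((ha'.norm.integrable_of_hasCompactSupport hsupp.deriv.norm).div_const _)
  have hmeas : Measurable (farWeight a z₀) := by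
    unfold farWeight
    have := ha'.measurable
    have := ha.continuous.measurable
    fun_prop
  refine hdom.integrableOn.mono' hmeas.aestronglyMeasurable
    (ae_restrict_of_forall_mem (measurableSet_lt measurable_const (by fun_prop)) fun z hz => ?_)
  have hz : r ≤ |z - z₀| := le_of_lt hz
  rw [Real.norm_of_nonneg (farWeight_nonneg a z₀ z)]
  unfold farWeight
  gcongr

theorem norm_deriv_div_add_le_mul_farWeight {φ : ℝ → ℝ} {a : ℝ → ℂ} {C z₀ z : ℝ}
    (hφ : ContDiff ℝ 2 φ) (hcrit : deriv φ z₀ = 0)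
    (hφ'' : ∀ z, 1 ≤ deriv (deriv φ) z ∧ deriv (deriv φ) z ≤ C) (hz : 0 < |z - z₀|) :
    ‖deriv a z‖ / |deriv φ z| + ‖a z‖ * |deriv (deriv φ) z| / deriv φ z ^ 2 ≤
      C * farWeight a z₀ z := by
  have hψ := abs_sub_le_abs_deriv hφ hcrit (fun x => (hφ'' x).1) z
  obtain ⟨h1, h2⟩ := hφ'' z
  rw [abs_of_nonneg (by linarith : 0 ≤ deriv (deriv φ) z), ← sq_abs (deriv φ z)]
  have e1 : ‖deriv a z‖ / |deriv φ z| ≤ C * (‖deriv a z‖ / |z - z₀|) :=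
    (div_le_div_of_nonneg_left (norm_nonneg _) hz hψ).trans
      (le_mul_of_one_le_left (by positivity) (h1.trans h2))
  have e2 : ‖a z‖ * deriv (deriv φ) z / |deriv φ z| ^ 2 ≤ C * (‖a z‖ / |z - z₀| ^ 2) := by
    rw [mul_div_assoc', mul_comm C]
    gcongr
    exact mul_nonneg (norm_nonneg _) (by linarith)
  unfold farWeight
  linarith

theorem norm_add_mul_norm_deriv_le_farWeight (a : ℝ → ℂ) {z₀ z r : ℝ} (hr : 0 ≤ r)
    (hz₀ : 0 < |z - z₀|) (hz : |z - z₀| ≤ 2 * r) :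
    ‖a z‖ + r * ‖deriv a z‖ ≤ 4 * r ^ 2 * farWeight a z₀ z := by
  unfold farWeight
  set s := |z - z₀|
  have h1 : ‖a z‖ ≤ 4 * r ^ 2 * (‖a z‖ / s ^ 2) := by
    rw [mul_div_assoc', le_div_iff₀ (by positivity)]
    have : s ^ 2 ≤ 4 * r ^ 2 := by nlinarith
    nlinarith [norm_nonneg (a z)]
  have h2 : r * ‖deriv a z‖ ≤ 4 * r ^ 2 * (‖deriv a z‖ / s) := by
    rw [mul_div_assoc', le_div_iff₀ hz₀]
    nlinarith [norm_nonneg (deriv a z), mul_nonneg hr (norm_nonneg (deriv a z))]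
  linarith

theorem norm_div_le_four_mul_setIntegral_farWeight {a : ℝ → ℂ} {z₀ r u x : ℝ}
    (ha : ContDiff ℝ 1 a) (hr : 0 < r) (hx : x ∈ Icc u (u + r))
    (hann : ∀ z ∈ Ioo u (u + r), 0 < |z - z₀| ∧ |z - z₀| ≤ 2 * r)
    (hB : IntegrableOn (farWeight a z₀) (Ioo u (u + r))) :
    ‖a x‖ / r ≤ 4 * ∫ z in Ioo u (u + r), farWeight a z₀ z := by
  have havg := mul_norm_le_setIntegral_Ioo ha hx
  rw [add_sub_cancel_left] at havg
  have hann' : ∫ z in Ioo u (u + r), (‖a z‖ + r * ‖deriv a z‖) ≤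
      4 * r ^ 2 * ∫ z in Ioo u (u + r), farWeight a z₀ z := by
    rw [← integral_const_mul]
    exact integral_mono_of_nonneg (ae_of_all _ fun z => by positivity) (hB.const_mul _)
      (ae_restrict_of_forall_mem measurableSet_Ioo fun z hz =>
        norm_add_mul_norm_deriv_le_farWeight a hr.le (hann z hz).1 (hann z hz).2)
  rw [div_le_iff₀ hr]
  nlinarith [havg.trans hann']

theorem norm_intervalIntegral_exp_mul_le_farWeight {φ : ℝ → ℝ} {a : ℝ → ℂ} {C z₀ t r u v : ℝ}
    (hφ : ContDiff ℝ 2 φ) (hcrit : deriv φ z₀ = 0)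
    (hφ'' : ∀ z, 1 ≤ deriv (deriv φ) z ∧ deriv (deriv φ) z ≤ C) (ha : ContDiff ℝ 1 a)
    (ht : t ≠ 0) (hr : 0 < r) (huv : u ≤ v) (hfar : ∀ x ∈ Icc u v, r ≤ |x - z₀|)
    (hB : IntegrableOn (farWeight a z₀) (Ioo u v)) :
    ‖∫ x in u..v, Complex.exp (-Complex.I * t * φ x) * a x‖ ≤
      |t|⁻¹ * ((‖a u‖ + ‖a v‖) / r + C * ∫ z in Ioo u v, farWeight a z₀ z) := by
  have hψ : ∀ x ∈ Icc u v, r ≤ |deriv φ x| := fun x hx =>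
    (hfar x hx).trans (abs_sub_le_abs_deriv hφ hcrit (fun y => (hφ'' y).1) x)
  refine (norm_intervalIntegral_exp_mul_le hφ ha ht huv
    fun x hx => abs_pos.1 (hr.trans_le (hψ x hx))).trans ?_
  have hbdry : ∀ x ∈ Icc u v, ‖a x‖ / |deriv φ x| ≤ ‖a x‖ / r := fun x hx =>
    div_le_div_of_nonneg_left (norm_nonneg _) hr (hψ x hx)
  have hint : ∫ x in u..v, (‖deriv a x‖ / |deriv φ x| +
      ‖a x‖ * |deriv (deriv φ) x| / deriv φ x ^ 2) ≤ C * ∫ z in Ioo u v, farWeight a z₀ z := by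
    rw [intervalIntegral.integral_of_le huv, integral_Ioc_eq_integral_Ioo, ← integral_const_mul]
    refine integral_mono_of_nonneg (ae_of_all _ fun x => by positivity) (hB.const_mul C)
      (ae_restrict_of_forall_mem measurableSet_Ioo fun x hx => norm_deriv_div_add_le_mul_farWeight
        hφ hcrit hφ'' (hr.trans_le (hfar x (Ioo_subset_Icc_self hx))))
  have := hbdry u (left_mem_Icc.2 huv)
  have := hbdry v (right_mem_Icc.2 huv)
  gcongr
  rw [add_div]
  linarith

theorem norm_intervalIntegral_exp_mul_right_le {φ : ℝ → ℝ} {a : ℝ → ℂ} {C z₀ t r M : ℝ}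
    (hφ : ContDiff ℝ 2 φ) (hcrit : deriv φ z₀ = 0)
    (hφ'' : ∀ z, 1 ≤ deriv (deriv φ) z ∧ deriv (deriv φ) z ≤ C) (ha : ContDiff ℝ 1 a)
    (ht : t ≠ 0) (hr : 0 < r) (hM : z₀ + r ≤ M) (haM : a M = 0)
    (hB : IntegrableOn (farWeight a z₀) (Ioi (z₀ + r))) :
    ‖∫ x in (z₀ + r)..M, Complex.exp (-Complex.I * t * φ x) * a x‖ ≤
      (C + 4) * |t|⁻¹ * ∫ z in Ioi (z₀ + r), farWeight a z₀ z := by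
  have hfar := norm_intervalIntegral_exp_mul_le_farWeight hφ hcrit hφ'' ha ht hr hM
    (fun x hx => by rw [abs_of_nonneg] <;> linarith [hx.1]) (hB.mono_set Ioo_subset_Ioi_self)
  have hbdry := norm_div_le_four_mul_setIntegral_farWeight (z₀ := z₀) ha hr
    (left_mem_Icc.2 (le_add_of_nonneg_right hr.le))
    (fun z hz => by rw [abs_of_pos (by linarith [hz.1])]; constructor <;> linarith [hz.1, hz.2])
    (hB.mono_set Ioo_subset_Ioi_self)
  have hmono : ∀ s ⊆ Ioi (z₀ + r), ∫ z in s, farWeight a z₀ z ≤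
      ∫ z in Ioi (z₀ + r), farWeight a z₀ z := fun s hs =>
    setIntegral_mono_set hB (ae_of_all _ (farWeight_nonneg a z₀)) hs.eventuallyLE
  have hC : 0 ≤ C := zero_le_one.trans ((hφ'' z₀).1.trans (hφ'' z₀).2)
  rw [haM, norm_zero, add_zero] at hfar
  grw [hfar, hbdry, hmono _ Ioo_subset_Ioi_self, hmono _ Ioo_subset_Ioi_self]
  exact le_of_eq (by ring)

theorem norm_intervalIntegral_exp_mul_left_le {φ : ℝ → ℝ} {a : ℝ → ℂ} {C z₀ t r M : ℝ}
    (hφ : ContDiff ℝ 2 φ) (hcrit : deriv φ z₀ = 0)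
    (hφ'' : ∀ z, 1 ≤ deriv (deriv φ) z ∧ deriv (deriv φ) z ≤ C) (ha : ContDiff ℝ 1 a)
    (ht : t ≠ 0) (hr : 0 < r) (hM : M ≤ z₀ - r) (haM : a M = 0)
    (hB : IntegrableOn (farWeight a z₀) (Iio (z₀ - r))) :
    ‖∫ x in M..(z₀ - r), Complex.exp (-Complex.I * t * φ x) * a x‖ ≤
      (C + 4) * |t|⁻¹ * ∫ z in Iio (z₀ - r), farWeight a z₀ z := by
  have hfar := norm_intervalIntegral_exp_mul_le_farWeight hφ hcrit hφ'' ha ht hr hM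
    (fun x hx => by rw [abs_sub_comm, abs_of_nonneg] <;> linarith [hx.2])
    (hB.mono_set Ioo_subset_Iio_self)
  have hwin : Ioo (z₀ - r - r) (z₀ - r - r + r) ⊆ Iio (z₀ - r) := fun z hz => by
    simp only [mem_Iio]; linarith [hz.2]
  have hbdry := norm_div_le_four_mul_setIntegral_farWeight (z₀ := z₀) (x := z₀ - r) ha hr
    ⟨by linarith, by linarith⟩
    (fun z hz => by
      rw [abs_sub_comm, abs_of_pos (by linarith [hz.2])]; constructor <;> linarith [hz.1, hz.2])
    (hB.mono_set hwin)
  have hmono : ∀ s ⊆ Iio (z₀ - r), ∫ z in s, farWeight a z₀ z ≤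
      ∫ z in Iio (z₀ - r), farWeight a z₀ z := fun s hs =>
    setIntegral_mono_set hB (ae_of_all _ (farWeight_nonneg a z₀)) hs.eventuallyLE
  have hC : 0 ≤ C := zero_le_one.trans ((hφ'' z₀).1.trans (hφ'' z₀).2)
  rw [haM, norm_zero, zero_add] at hfar
  grw [hfar, hbdry, hmono _ hwin, hmono _ Ioo_subset_Iio_self]
  exact le_of_eq (by ring)

theorem HasCompactSupport.exists_tsupport_subset_Ioo {E : Type*} [Zero E] [TopologicalSpace E]
    {f : ℝ → E} (hf : HasCompactSupport f) (R₀ : ℝ) : ∃ M, R₀ ≤ M ∧ tsupport f ⊆ Ioo (-M) M := by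
  obtain ⟨R, hR⟩ := hf.isCompact.isBounded.subset_ball (0 : ℝ)
  refine ⟨max R R₀, le_max_right _ _, ?_⟩
  simpa [Real.ball_eq_Ioo] using hR.trans (Metric.ball_subset_ball (le_max_left R R₀))

theorem integral_eq_intervalIntegral_add_add {E : Type*} [NormedAddCommGroup E] [NormedSpace ℝ E]
    {f : ℝ → E} (hf : Continuous f) {a b : ℝ} (p q : ℝ) (hsupp : Function.support f ⊆ Ioc a b) :
    ∫ x, f x = (∫ x in a..p, f x) + (∫ x in p..q, f x) + ∫ x in q..b, f x := by
  rw [intervalIntegral.integral_add_adjacent_intervals (hf.intervalIntegrable _ _)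
      (hf.intervalIntegrable _ _),
    intervalIntegral.integral_add_adjacent_intervals (hf.intervalIntegrable _ _)
      (hf.intervalIntegrable _ _),
    intervalIntegral.integral_eq_integral_of_support_subset hsupp]

theorem norm_intervalIntegral_exp_mul_le_setIntegral_norm {φ : ℝ → ℝ} {a : ℝ → ℂ} {u v : ℝ}
    (t : ℝ) (ha : Continuous a) (huv : u ≤ v) :
    ‖∫ x in u..v, Complex.exp (-Complex.I * t * φ x) * a x‖ ≤ ∫ x in Ioo u v, ‖a x‖ := by
  rw [← integral_Ioc_eq_integral_Ioo, ← intervalIntegral.integral_of_le huv]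
  refine intervalIntegral.norm_integral_le_of_norm_le huv (ae_of_all _ fun x _ => ?_)
    (ha.norm.intervalIntegrable _ _)
  simp [Complex.norm_exp]

theorem setOf_abs_sub_lt_eq_Ioo (z₀ r : ℝ) : {z : ℝ | |z - z₀| < r} = Ioo (z₀ - r) (z₀ + r) := by
  ext z
  simp only [mem_ofPred_eq, mem_Ioo, abs_sub_lt_iff]
  constructor <;> rintro ⟨h₁, h₂⟩ <;> constructor <;> linarith

theorem setOf_lt_abs_sub_eq_union (z₀ r : ℝ) :
    {z : ℝ | r < |z - z₀|} = Iio (z₀ - r) ∪ Ioi (z₀ + r) := by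
  ext z
  simp only [mem_ofPred_eq, mem_union, mem_Iio, mem_Ioi, lt_abs]
  constructor <;> rintro (h | h) <;> [right; left; right; left] <;> linarith

theorem norm_integral_exp_mul_le_near_add_far {φ : ℝ → ℝ} {a : ℝ → ℂ} {C z₀ t r : ℝ}
    (hφ : ContDiff ℝ 2 φ) (hcrit : deriv φ z₀ = 0)
    (hφ'' : ∀ z, 1 ≤ deriv (deriv φ) z ∧ deriv (deriv φ) z ≤ C) (ha : ContDiff ℝ 1 a)
    (hsupp : HasCompactSupport a) (ht : t ≠ 0) (hr : 0 < r) :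
    ‖∫ z, Complex.exp (-Complex.I * t * φ z) * a z‖ ≤
      (∫ z in {z | |z - z₀| < r}, ‖a z‖) +
        (C + 4) * |t|⁻¹ * ∫ z in {z | r < |z - z₀|}, farWeight a z₀ z := by
  obtain ⟨M, hM, hsuppM⟩ := hsupp.exists_tsupport_subset_Ioo (|z₀| + r)
  have haM : ∀ x ∉ Ioo (-M) M, a x = 0 := fun x hx =>
    image_eq_zero_of_notMem_tsupport fun h => hx (hsuppM h)
  have hFa : Continuous fun z => Complex.exp (-Complex.I * t * φ z) * a z := by
    have := hφ.continuous; have := ha.continuous; fun_prop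
  have hB : IntegrableOn (farWeight a z₀) (Iio (z₀ - r) ∪ Ioi (z₀ + r)) :=
    setOf_lt_abs_sub_eq_union z₀ r ▸ integrableOn_farWeight ha hsupp z₀ hr
  have hleft := norm_intervalIntegral_exp_mul_left_le hφ hcrit hφ'' ha ht hr
    (by linarith [neg_abs_le z₀]) (haM _ fun h => h.1.false) (hB.mono_set subset_union_left)
  have hnear := norm_intervalIntegral_exp_mul_le_setIntegral_norm (φ := φ) t ha.continuous
    (by linarith : z₀ - r ≤ z₀ + r)
  have hright := norm_intervalIntegral_exp_mul_right_le hφ hcrit hφ'' ha ht hr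
    (by linarith [le_abs_self z₀]) (haM _ fun h => h.2.false) (hB.mono_set subset_union_right)
  rw [integral_eq_intervalIntegral_add_add hFa (z₀ - r) (z₀ + r)
      ((Function.support_mul_subset_right _ _).trans
        ((subset_tsupport a).trans (hsuppM.trans Ioo_subset_Ioc_self))),
    setOf_abs_sub_lt_eq_Ioo, setOf_lt_abs_sub_eq_union,
    setIntegral_union (Ioi_disjoint_Iio_of_le (by linarith)).symm measurableSet_Ioi
      (hB.mono_set subset_union_left) (hB.mono_set subset_union_right)]
  grw [norm_add_le, norm_add_le, hleft, hnear, hright]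
  exact le_of_eq (by ring)

/-- Stationary phase lemma: if φ' (z₀) = 0 and 1 ≤ φ'' ≤ C, then for t ≠ 0,
    |∫ e^{−itφ(z)} a(z) dz| is bounded by the mass of a near the critical point plus
    |t|⁻¹ times weighted integrals away from it, with constant depending only on C. -/
theorem stationary_phase (C : ℝ) (hC : 1 ≤ C) :
    ∃ K : ℝ, 0 < K ∧
      ∀ (φ : ℝ → ℝ) (a : ℝ → ℂ) (z₀ t : ℝ), t ≠ 0 →
        ContDiff ℝ 2 φ →
        deriv φ z₀ = 0 →
        (∀ z, 1 ≤ deriv (deriv φ) z ∧ deriv (deriv φ) z ≤ C) →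
        ContDiff ℝ 1 a → HasCompactSupport a →
        ‖∫ z : ℝ, Complex.exp (-Complex.I * t * φ z) * a z‖ ≤
          K * ((∫ z in {z : ℝ | |z - z₀| < |t| ^ (-(1:ℝ)/2)}, ‖a z‖) +
            |t|⁻¹ * ∫ z in {z : ℝ | |z - z₀| > |t| ^ (-(1:ℝ)/2)},
              (‖a z‖ / |z - z₀| ^ 2 + ‖deriv a z‖ / |z - z₀|)) := by
  refine ⟨C + 4, by linarith, fun φ a z₀ t ht hφ hcrit hφ'' ha hsupp => ?_⟩
  refine (norm_integral_exp_mul_le_near_add_far hφ hcrit hφ'' ha hsupp ht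
    (rpow_pos_of_pos (abs_pos.2 ht) (-(1:ℝ)/2))).trans ?_
  rw [mul_add, ← mul_assoc]
  exact add_le_add (le_mul_of_one_le_left (integral_nonneg fun _ => norm_nonneg _) (by linarith))
    le_rfl
end

section
/- For x, y ∈ ℝ² with |x| > 4, the inequality |log(|x−y|/|x|)| ≲ 1 + log⟨y⟩ + log⁻(|x−y|) holds, where log⁻(r) = −log(r)·𝟙_{0<r<1}. -/
open Real

/-!
Write `a = ‖x‖`, `r = ‖x - y‖`, `t = ‖y‖`. By the triangle inequality and `a ≥ 1`,
`r ≤ a + t ≤ a (1 + t)` and `a ≤ r + t ≤ max r 1 · (1 + t)`, so `log (r / a)` lies between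
`-(log (1 + t) + max (-log r) 0)` and `log (1 + t)`. Finally `1 + t ≤ 2 ⟨y⟩` and `log 2 < 1`,
so the estimate holds with constant `1`.
-/

lemma Real.log_one_add_le_one_add_log_sqrt {t : ℝ} (ht : 0 ≤ t) :
    log (1 + t) ≤ 1 + log (√(1 + t ^ 2)) := by
  have hsqrt : 1 + t ≤ 2 * √(1 + t ^ 2) := by
    have : (1 + t) / 2 ≤ √(1 + t ^ 2) := le_sqrt_of_sq_le (by nlinarith [sq_nonneg (1 - t)])
    linarith
  calc log (1 + t) ≤ log (2 * √(1 + t ^ 2)) := log_le_log (by linarith) hsqrt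
    _ = log 2 + log (√(1 + t ^ 2)) := log_mul two_ne_zero (by positivity)
    _ ≤ 1 + log (√(1 + t ^ 2)) := by linarith [log_two_lt_d9]

lemma Real.abs_log_div_le_of_abs_sub_le {a r t : ℝ} (ha : 1 ≤ a) (hr : 0 < r)
    (hrat : |r - a| ≤ t) :
    |log (r / a)| ≤ log (1 + t) + max (-log r) 0 := by
  have ha₀ : 0 < a := by linarith
  obtain ⟨har, hra⟩ := abs_sub_le_iff.mp hrat
  have ht : 0 ≤ t := (abs_nonneg _).trans hrat
  rw [log_div hr.ne' ha₀.ne', abs_sub_le_iff]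
  constructor
  · have : log r ≤ log a + log (1 + t) := by
      rw [← log_mul ha₀.ne' (by linarith)]
      exact log_le_log hr (by nlinarith)
    linarith [le_max_right (-log r) 0]
  · rcases le_or_gt 1 r with hr₁ | hr₁
    · have : log a ≤ log r + log (1 + t) := by
        rw [← log_mul hr.ne' (by linarith)]
        exact log_le_log ha₀ (by nlinarith)
      linarith [le_max_right (-log r) 0]
    · have : log a ≤ log (1 + t) := log_le_log ha₀ (by linarith)
      linarith [le_max_left (-log r) 0]

lemma abs_log_norm_sub_div_norm_le {E : Type*} [SeminormedAddCommGroup E] {x : E} (y : E)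
    (hx : 1 ≤ ‖x‖) :
    |log (‖x - y‖ / ‖x‖)| ≤ log (1 + ‖y‖) + max (-log ‖x - y‖) 0 := by
  rcases (norm_nonneg (x - y)).eq_or_lt with hr | hr
  · rw [← hr, zero_div, log_zero, abs_zero]
    exact add_nonneg (log_nonneg (by linarith [norm_nonneg y])) (le_max_right _ _)
  · refine abs_log_div_le_of_abs_sub_le hx hr ?_
    simpa using abs_norm_sub_norm_le (x - y) x

/-- For |x| > 4 one has |log(|x−y|/|x|)| ≲ 1 + log⟨y⟩ + log⁻(|x−y|). -/
theorem log_quotient_estimate :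
    ∃ C : ℝ, 0 < C ∧
      ∀ x y : EuclideanSpace ℝ (Fin 2), 4 < ‖x‖ →
        |Real.log (‖x - y‖ / ‖x‖)| ≤
          C * (1 + Real.log (Real.sqrt (1 + ‖y‖ ^ 2)) + max (-Real.log ‖x - y‖) 0) := by
  refine ⟨1, one_pos, fun x y hx => ?_⟩
  rw [one_mul]
  calc |log (‖x - y‖ / ‖x‖)| ≤ log (1 + ‖y‖) + max (-log ‖x - y‖) 0 :=
        abs_log_norm_sub_div_norm_le y (by linarith)
    _ ≤ 1 + log (√(1 + ‖y‖ ^ 2)) + max (-log ‖x - y‖) 0 := by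
        gcongr
        exact log_one_add_le_one_add_log_sqrt (norm_nonneg y)
end

section
/- For 0 < w < m and ξ ∈ ℝ² \ {0}, the matrix A(w,ξ) = (1/((w²+|ξ|²)|ξ|²)) · [[2m + (|ξ|²/w²)(m − √(m²−w²)), ξ̄],[ξ, (|ξ|²/w²)(m − √(m²−w²))]] (where ξ is identified with ξ₁ + iξ₂) is self-adjoint and positive definite, with eigenvalues λ_{1,2} = (1/((w²+|ξ|²)|ξ|²))·( m + (|ξ|²/w²)(m − √(m²−w²)) ± √(m²+|ξ|²) ). -/
/-!
Write `T = (|ξ|²/w²)(m - √(m² - w²))`, so that `A` is a positive multiple of the Hermitian matrix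
`M = [[2m + T, ξ̄], [ξ, T]]`. Since `T (m + √(m² - w²)) = |ξ|²`, the determinant
`(2m + T) T - |ξ|² = T (m - √(m² - w²) + T)` of `M` is positive, and so is its corner `2m + T`;
completing the square then shows that `M` is positive definite. The eigenvalues `μ = m + T ± √(m² + |ξ|²)`
are the roots of `(μ - 2m - T)(μ - T) = |ξ|²`, with eigenvectors `(ξ̄, μ - 2m - T)`.
-/

open Matrix Real ComplexConjugate
open scoped ComplexOrder

namespace Matrix

lemma isHermitian_fin_two_ofReal (a b : ℝ) (z : ℂ) :
    (!![(a : ℂ), conj z; z, (b : ℂ)]).IsHermitian := by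
  ext i j
  fin_cases i <;> fin_cases j <;> simp

lemma star_dotProduct_mulVec_fin_two_ofReal {a : ℝ} (b : ℝ) (z : ℂ) (ha : a ≠ 0)
    (x : Fin 2 → ℂ) :
    star x ⬝ᵥ (!![(a : ℂ), conj z; z, (b : ℂ)] *ᵥ x) =
      (((Complex.normSq (a * x 0 + conj z * x 1) +
          (a * b - Complex.normSq z) * Complex.normSq (x 1)) / a : ℝ) : ℂ) := by
  have ha' : (a : ℂ) ≠ 0 := by exact_mod_cast ha
  push_cast
  simp only [Complex.normSq_eq_conj_mul_self, map_add, map_mul, Complex.conj_ofReal,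
    Complex.conj_conj]
  simp only [dotProduct, Pi.star_apply, RCLike.star_def, mulVec, of_apply, cons_val',
    cons_val_fin_one, Fin.sum_univ_two, cons_val_zero, cons_val_one]
  field_simp
  ring

lemma posDef_fin_two_ofReal {a b : ℝ} {z : ℂ} (ha : 0 < a) (hdet : Complex.normSq z < a * b) :
    (!![(a : ℂ), conj z; z, (b : ℂ)]).PosDef := by
  refine .of_dotProduct_mulVec_pos (isHermitian_fin_two_ofReal a b z) fun x hx => ?_
  rw [star_dotProduct_mulVec_fin_two_ofReal b z ha.ne', Complex.zero_lt_real]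
  refine div_pos ?_ ha
  by_cases hx1 : x 1 = 0
  · have hx0 : x 0 ≠ 0 := fun hx0 => hx (by ext i; fin_cases i <;> simp [hx0, hx1])
    have : (a : ℂ) * x 0 ≠ 0 := mul_ne_zero (by exact_mod_cast ha.ne') hx0
    simpa [hx1] using Complex.normSq_pos.mpr this
  · exact add_pos_of_nonneg_of_pos (Complex.normSq_nonneg _)
      (mul_pos (sub_pos.mpr hdet) (Complex.normSq_pos.mpr hx1))

lemma exists_mulVec_fin_two_ofReal_eq_smul {a b μ : ℝ} {z : ℂ} (hz : z ≠ 0)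
    (hμ : (μ - a) * (μ - b) = Complex.normSq z) :
    ∃ v ≠ 0, !![(a : ℂ), conj z; z, (b : ℂ)] *ᵥ v = (μ : ℂ) • v := by
  have hμ' : ((μ : ℂ) - a) * (μ - b) = z * conj z := by
    rw [Complex.mul_conj]
    exact_mod_cast hμ
  refine ⟨![conj z, μ - a], fun h => hz ?_, ?_⟩
  · simpa using congrFun h 0
  · ext i
    fin_cases i
    · simp only [Fin.zero_eta, mulVec_cons, mulVec_empty, add_zero, Pi.add_apply, Pi.smul_apply,
        Function.comp_apply, cons_val_zero, head_cons, smul_eq_mul, tail_cons]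
      ring
    · simp only [Fin.mk_one, mulVec_cons, mulVec_empty, add_zero, Pi.add_apply, Pi.smul_apply,
        Function.comp_apply, cons_val_one, cons_val_fin_one, head_cons, smul_eq_mul, tail_cons]
      linear_combination -hμ'

end Matrix

lemma sqrt_sq_sub_sq_lt {m w : ℝ} (hw : 0 < w) (hwm : w < m) : √(m ^ 2 - w ^ 2) < m :=
  (Real.sqrt_lt' (hw.trans hwm)).mpr (by linarith [pow_pos hw 2])

lemma div_sq_mul_sub_sqrt_mul_add_sqrt (q : ℝ) {m w : ℝ} (hw : 0 < w) (hwm : w ≤ m) :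
    q / w ^ 2 * (m - √(m ^ 2 - w ^ 2)) * (m + √(m ^ 2 - w ^ 2)) = q := by
  have hs : √(m ^ 2 - w ^ 2) ^ 2 = m ^ 2 - w ^ 2 := Real.sq_sqrt (by nlinarith)
  field_simp
  linear_combination (-q) * hs

theorem A_matrix_positive_definite_general
    (m w ξ₁ ξ₂ : ℝ) (hw : 0 < w) (hwm : w < m)
    (hξ : (ξ₁, ξ₂) ≠ (0, 0)) :
    let q : ℝ := ξ₁ ^ 2 + ξ₂ ^ 2
    let ξc : ℂ := Complex.mk ξ₁ ξ₂
    let A : Matrix (Fin 2) (Fin 2) ℂ :=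
      ((1 / ((w ^ 2 + q) * q) : ℝ) : ℂ) •
        !![((2 * m + (q / w ^ 2) * (m - Real.sqrt (m ^ 2 - w ^ 2)) : ℝ) : ℂ),
             (starRingEnd ℂ) ξc;
           ξc, (((q / w ^ 2) * (m - Real.sqrt (m ^ 2 - w ^ 2)) : ℝ) : ℂ)]
    A.IsHermitian ∧ A.PosDef ∧
    (∀ s : ℝ, s = 1 ∨ s = -1 →
      ∃ v : Fin 2 → ℂ, v ≠ 0 ∧
        A.mulVec v =
          (((1 / ((w ^ 2 + q) * q) *
              (m + (q / w ^ 2) * (m - Real.sqrt (m ^ 2 - w ^ 2)) +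
                s * Real.sqrt (m ^ 2 + q)) : ℝ) : ℂ)) • v) := by
  intro q ξc A
  set T := q / w ^ 2 * (m - √(m ^ 2 - w ^ 2))
  have hξc : ξc ≠ 0 := fun h => hξ (by simp_all [ξc, Complex.ext_iff])
  have hnorm : Complex.normSq ξc = q := by simp [ξc, Complex.normSq_mk, q, sq]
  have hq : 0 < q := hnorm ▸ Complex.normSq_pos.mpr hξc
  have hsqrt := sqrt_sq_sub_sq_lt hw hwm
  have hT : 0 < T := mul_pos (by positivity) (sub_pos.mpr hsqrt)
  have hTq : T * (m + √(m ^ 2 - w ^ 2)) = q := div_sq_mul_sub_sqrt_mul_add_sqrt q hw hwm.le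
  have hdet : Complex.normSq ξc < (2 * m + T) * T := by
    rw [hnorm]
    nlinarith
  have hA : A.PosDef :=
    (posDef_fin_two_ofReal (by linarith) hdet).smul (Complex.zero_lt_real.mpr (by positivity))
  refine ⟨hA.isHermitian, hA, fun s hs => ?_⟩
  have hμ : (m + T + s * √(m ^ 2 + q) - (2 * m + T)) * (m + T + s * √(m ^ 2 + q) - T) =
      Complex.normSq ξc := by
    have hs2 : s ^ 2 = 1 := by rcases hs with rfl | rfl <;> norm_num
    rw [hnorm]
    linear_combination (m ^ 2 + q) * hs2 + s ^ 2 * Real.sq_sqrt (by positivity : 0 ≤ m ^ 2 + q)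
  obtain ⟨v, hv, hMv⟩ := exists_mulVec_fin_two_ofReal_eq_smul hξc hμ
  exact ⟨v, hv, by rw [smul_mulVec, hMv, smul_smul, ← Complex.ofReal_mul]⟩

/-- The matrix A(w,ξ) arising in the analysis of threshold eigenfunctions is
    self-adjoint and positive definite, with the stated eigenvalues. -/
theorem A_matrix_positive_definite
    (m w ξ₁ ξ₂ : ℝ) (hm : 0 < m) (hw : 0 < w) (hwm : w < m)
    (hξ : (ξ₁, ξ₂) ≠ (0, 0)) :
    let q : ℝ := ξ₁ ^ 2 + ξ₂ ^ 2
    let ξc : ℂ := Complex.mk ξ₁ ξ₂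
    let A : Matrix (Fin 2) (Fin 2) ℂ :=
      ((1 / ((w ^ 2 + q) * q) : ℝ) : ℂ) •
        !![((2 * m + (q / w ^ 2) * (m - Real.sqrt (m ^ 2 - w ^ 2)) : ℝ) : ℂ),
             (starRingEnd ℂ) ξc;
           ξc, (((q / w ^ 2) * (m - Real.sqrt (m ^ 2 - w ^ 2)) : ℝ) : ℂ)]
    A.IsHermitian ∧ A.PosDef ∧
    (∀ s : ℝ, s = 1 ∨ s = -1 →
      ∃ v : Fin 2 → ℂ, v ≠ 0 ∧
        A.mulVec v =
          (((1 / ((w ^ 2 + q) * q) *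
              (m + (q / w ^ 2) * (m - Real.sqrt (m ^ 2 - w ^ 2)) +
                s * Real.sqrt (m ^ 2 + q)) : ℝ) : ℂ)) • v) :=
  A_matrix_positive_definite_general m w ξ₁ ξ₂ hw hwm hξ
end

section
/- Suppose a : [0,∞) → ℂ is C¹ with |a(z)| ≲ z·χ(z)·(1+zr)^{−1/2} and |a'(z)| ≲ χ(z)·(1+zr)^{−1/2}, where χ is a smooth cutoff supported in [0,1] and r ≥ 0, m > 0. Then for the phase φ₋(z) = √(z²+m²) + zr/t with t > 0, one has |∫₀^∞ e^{−itφ₋(z)} a(z) dz| ≲ ⟨t⟩^{−1}, with constant independent of r. -/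
open MeasureTheory Real Filter

private lemma val_zero_of_continuous {F : Type*} [TopologicalSpace F] [T2Space F] [Zero F]
    {f : ℝ → F} (hf : Continuous f) {c : ℝ}
    {l : Filter ℝ} [l.NeBot] (hl : l ≤ nhds c) (h0 : ∀ᶠ x in l, f x = 0) : f c = 0 :=
  tendsto_nhds_unique ((hf.tendsto c).mono_left hl)
    (Filter.Tendsto.congr' (by filter_upwards [h0] with x hx using hx.symm) tendsto_const_nhds)

set_option maxHeartbeats 4000000 in
/-- Non-stationary phase bound: with φ₋(z) = √(z²+m²) + zr/t and an amplitude a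
    supported in [0,1] satisfying |a(z)| ≤ M z χ(z)(1+zr)^{−1/2} and
    |a'(z)| ≤ M χ(z)(1+zr)^{−1/2}, one has |∫₀^∞ e^{−itφ₋} a dz| ≲ M ⟨t⟩⁻¹,
    uniformly in r ≥ 0. -/
theorem nonstationary_phase_bound
    (m : ℝ) (hm : 0 < m) (χ : ℝ → ℝ) (hχ : ContDiff ℝ (⊤ : ℕ∞) χ)
    (hχsupp : Function.support χ ⊆ Set.Icc 0 1)
    (hχ01 : ∀ z, 0 ≤ χ z ∧ χ z ≤ 1) :
    ∃ C : ℝ, 0 < C ∧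
      ∀ (M r t : ℝ) (a : ℝ → ℂ), 0 ≤ M → 0 ≤ r → 0 < t →
        ContDiff ℝ 1 a →
        (∀ z, 0 ≤ z → ‖a z‖ ≤ M * (z * χ z * (1 + z * r) ^ (-(1:ℝ)/2))) →
        (∀ z, 0 ≤ z → ‖deriv a z‖ ≤ M * (χ z * (1 + z * r) ^ (-(1:ℝ)/2))) →
        ‖∫ z in Set.Ioi (0:ℝ),
            Complex.exp (-Complex.I * t * (Real.sqrt (z ^ 2 + m ^ 2) + z * r / t)) * a z‖
          ≤ C * M / Real.sqrt (1 + t ^ 2) := by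
  have hχc : Continuous χ := hχ.continuous
  have hχd : Differentiable ℝ χ := hχ.differentiable (by simp)
  have hχdc : Continuous (deriv χ) := hχ.continuous_deriv (by simp)
  obtain ⟨K0, hK0⟩ := (isCompact_Icc (a := (0:ℝ)) (b := 1)).exists_bound_of_continuousOn
    hχdc.continuousOn
  set K := max K0 0 with hKdef
  have hKnn : 0 ≤ K := le_max_right _ _
  have hχ0 : χ 0 = 0 := by
    apply val_zero_of_continuous hχc (l := nhdsWithin 0 (Set.Iio 0)) nhdsWithin_le_nhds
    filter_upwards [self_mem_nhdsWithin] with x hx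
    by_contra hne
    have := (hχsupp hne).1
    exact absurd this (by simpa using hx)
  have hχK : ∀ z ∈ Set.Icc (0:ℝ) 1, χ z ≤ K * z := by
    intro z hz
    have h1 : ∀ x ∈ Set.Icc (0:ℝ) 1, DifferentiableAt ℝ χ x := fun x _ => hχd x
    have h2 : ∀ x ∈ Set.Icc (0:ℝ) 1, ‖deriv χ x‖ ≤ K := fun x hx =>
      (hK0 x hx).trans (le_max_left _ _)
    have h3 := (convex_Icc (0:ℝ) 1).norm_image_sub_le_of_norm_deriv_le h1 h2
      (Set.left_mem_Icc.mpr (by norm_num)) hz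
    rw [hχ0, sub_zero, Real.norm_eq_abs, Real.norm_eq_abs, sub_zero,
      abs_of_nonneg (hz.1)] at h3
    exact (le_abs_self _).trans h3
  set s1 := Real.sqrt (1 + m^2) with hs1def
  have hs1pos : 0 < s1 := Real.sqrt_pos.mpr (by positivity)
  have hX : 0 ≤ K * (s1 + s1^2/m) := by positivity
  set C2 := K * (s1 + s1^2/m) + 1 with hC2def
  have hC2one : 1 ≤ C2 := by rw [hC2def]; linarith
  have hC2pos : 0 < C2 := by linarith
  refine ⟨Real.sqrt 2 * C2, mul_pos (by positivity) hC2pos, ?_⟩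
  intro M r t a hM hr ht ha haN haN'
  -- basic positivity
  have hm2 : ∀ z : ℝ, (0:ℝ) < z^2 + m^2 := fun z => by positivity
  have hspos : ∀ z : ℝ, 0 < Real.sqrt (z^2 + m^2) := fun z => Real.sqrt_pos.mpr (hm2 z)
  set E : ℝ → ℂ := fun z =>
    Complex.exp (-Complex.I * t * ((Real.sqrt (z ^ 2 + m ^ 2) + z * r / t : ℝ) : ℂ)) with hEdef
  set ψ : ℝ → ℝ := fun z => z / Real.sqrt (z^2 + m^2) + r / t with hψdef
  set ψd : ℝ → ℝ := fun z => m^2 / ((z^2 + m^2) * Real.sqrt (z^2 + m^2)) with hψddef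
  set g : ℝ → ℂ := fun z => a z / (Complex.I * t * (ψ z : ℂ)) with hgdef
  set Gd : ℝ → ℂ := fun z =>
    (deriv a z * (Complex.I * t * (ψ z : ℂ)) - a z * (Complex.I * t * (ψd z : ℂ))) /
      (Complex.I * t * (ψ z : ℂ))^2 with hGddef
  have htne : (t:ℂ) ≠ 0 := Complex.ofReal_ne_zero.mpr ht.ne'
  have hψpos : ∀ z : ℝ, 0 < z → 0 < ψ z := by
    intro z hz
    have h1 : 0 < z / Real.sqrt (z^2+m^2) := div_pos hz (hspos z)
    have h2 : 0 ≤ r / t := div_nonneg hr ht.le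
    rw [hψdef]; dsimp only; linarith
  have hdne : ∀ z : ℝ, 0 < z → (Complex.I * t * (ψ z:ℂ)) ≠ 0 := fun z hz =>
    mul_ne_zero (mul_ne_zero Complex.I_ne_zero htne) (Complex.ofReal_ne_zero.mpr (hψpos z hz).ne')
  -- derivatives
  have hsqder : ∀ z : ℝ, HasDerivAt (fun z => Real.sqrt (z^2 + m^2)) (z / Real.sqrt (z^2+m^2)) z := by
    intro z
    have h1 : HasDerivAt (fun z : ℝ => z^2 + m^2) (2*z) z := by
      simpa using ((hasDerivAt_pow 2 z).add_const (m^2))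
    have h2 := (Real.hasDerivAt_sqrt (hm2 z).ne').comp z h1
    refine h2.congr_deriv ?_
    field_simp
  have hφder : ∀ z : ℝ, HasDerivAt (fun z : ℝ => Real.sqrt (z^2+m^2) + z * r / t) (ψ z) z := by
    intro z
    have h3 : HasDerivAt (fun z : ℝ => z * r / t) (r / t) z := by
      have h4 := (hasDerivAt_id z).mul_const (r / t)
      have heq : (fun y : ℝ => id y * (r/t)) = (fun z : ℝ => z * r / t) := by
        funext x; simp only [id]; ring
      rw [heq, one_mul] at h4
      exact h4
    exact (hsqder z).add h3
  have hEder : ∀ z : ℝ, HasDerivAt E (E z * (-Complex.I * t * (ψ z : ℂ))) z := by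
    intro z
    have h4 := ((hφder z).ofReal_comp).const_mul (-Complex.I * (t:ℂ))
    have h5 := h4.cexp
    rw [hEdef]
    convert h5 using 1
  have hψder : ∀ z : ℝ, HasDerivAt ψ (ψd z) z := by
    intro z
    have h6 := ((hasDerivAt_id z).div (hsqder z) (hspos z).ne').add_const (r/t)
    rw [hψdef, hψddef]
    refine h6.congr_deriv ?_
    have hsq : Real.sqrt (z^2+m^2)^2 = z^2+m^2 := Real.sq_sqrt (hm2 z).le
    have hne := (hspos z).ne'
    field_simp
    simp only [id]
    nlinarith [hsq, hspos z, sq_nonneg z]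
  have haD : ∀ z : ℝ, HasDerivAt a (deriv a z) z := fun z => ((ha.differentiable (by simp)) z).hasDerivAt
  have hgder : ∀ z : ℝ, 0 < z → HasDerivAt g (Gd z) z := by
    intro z hz
    have hden : HasDerivAt (fun z : ℝ => Complex.I * t * (ψ z : ℂ)) (Complex.I * t * (ψd z : ℂ)) z :=
      ((hψder z).ofReal_comp).const_mul (Complex.I * t)
    have := (haD z).div hden (hdne z hz)
    rw [hgdef, hGddef]
    exact this
  have hhder : ∀ z : ℝ, 0 < z →
      HasDerivAt (fun z => E z * g z) (E z * Gd z - E z * a z) z := by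
    intro z hz
    have h7 := (hEder z).mul (hgder z hz)
    refine h7.congr_deriv ?_
    have hd := hdne z hz
    have hψ0 : (ψ z : ℂ) ≠ 0 := Complex.ofReal_ne_zero.mpr (hψpos z hz).ne'
    rw [hgdef]
    dsimp only
    field_simp
    ring
  -- vanishing of a at 0, 1 and beyond
  have ha0 : a 0 = 0 := by
    have h := haN 0 le_rfl
    simp only [zero_mul, mul_zero] at h
    exact norm_le_zero_iff.mp h
  have hasupp : ∀ z : ℝ, 1 < z → a z = 0 := by
    intro z hz
    have hχz : χ z = 0 := by
      by_contra hne
      exact absurd ((hχsupp hne).2) (by linarith)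
    have h := haN z (by linarith)
    rw [hχz] at h
    simp only [mul_zero, zero_mul] at h
    exact norm_le_zero_iff.mp h
  have ha1 : a 1 = 0 := by
    apply val_zero_of_continuous ha.continuous (l := nhdsWithin 1 (Set.Ioi 1)) nhdsWithin_le_nhds
    filter_upwards [self_mem_nhdsWithin] with x hx using hasupp x hx
  -- norm bounds
  have hpow1 : ∀ z : ℝ, 0 ≤ z → (1 + z*r) ^ (-(1:ℝ)/2) ≤ 1 := by
    intro z hz
    apply Real.rpow_le_one_of_one_le_of_nonpos
    · nlinarith [mul_nonneg hz hr]
    · norm_num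
  have hpow0 : ∀ z : ℝ, 0 ≤ z → 0 ≤ (1 + z*r) ^ (-(1:ℝ)/2) := by
    intro z hz
    positivity
  have hanorm : ∀ z ∈ Set.Ioc (0:ℝ) 1, ‖a z‖ ≤ M * K * z^2 := by
    intro z hz
    have h1 : ‖a z‖ ≤ M * (z * χ z * (1+z*r)^(-(1:ℝ)/2)) := haN z hz.1.le
    have h2 : z * χ z * (1+z*r)^(-(1:ℝ)/2) ≤ z * (K*z) * 1 := by
      have hχz := hχK z ⟨hz.1.le, hz.2⟩
      have h0χ := (hχ01 z).1
      have hp1 := hpow1 z hz.1.le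
      have hp0 := hpow0 z hz.1.le
      nlinarith [mul_nonneg (mul_nonneg hz.1.le h0χ) (sub_nonneg.mpr hp1),
        mul_le_mul_of_nonneg_left hχz hz.1.le]
    calc ‖a z‖ ≤ M * (z * χ z * (1+z*r)^(-(1:ℝ)/2)) := h1
      _ ≤ M * (z * (K*z) * 1) := mul_le_mul_of_nonneg_left h2 hM
      _ = M * K * z^2 := by ring
  have hadnorm : ∀ z ∈ Set.Ioc (0:ℝ) 1, ‖deriv a z‖ ≤ M * K * z := by
    intro z hz
    have h1 : ‖deriv a z‖ ≤ M * (χ z * (1+z*r)^(-(1:ℝ)/2)) := haN' z hz.1.le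
    have h2 : χ z * (1+z*r)^(-(1:ℝ)/2) ≤ (K*z) * 1 := by
      have hχz := hχK z ⟨hz.1.le, hz.2⟩
      have := (hχ01 z).1
      have := hpow1 z hz.1.le
      have := hpow0 z hz.1.le
      nlinarith
    calc ‖deriv a z‖ ≤ M * (χ z * (1+z*r)^(-(1:ℝ)/2)) := h1
      _ ≤ M * ((K*z) * 1) := mul_le_mul_of_nonneg_left h2 hM
      _ = M * K * z := by ring
  have haM : ∀ z ∈ Set.Ioc (0:ℝ) 1, ‖a z‖ ≤ M := by
    intro z hz
    have h1 : ‖a z‖ ≤ M * (z * χ z * (1+z*r)^(-(1:ℝ)/2)) := haN z hz.1.le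
    have h2 : z * χ z * (1+z*r)^(-(1:ℝ)/2) ≤ 1 := by
      have h0χ := (hχ01 z).1
      have h1χ := (hχ01 z).2
      have hp1 := hpow1 z hz.1.le
      have hp0 := hpow0 z hz.1.le
      have e1 : z * χ z * ((1+z*r)^(-(1:ℝ)/2)) ≤ z * χ z * 1 :=
        mul_le_mul_of_nonneg_left hp1 (mul_nonneg hz.1.le h0χ)
      have e2 : z * χ z ≤ z * 1 := mul_le_mul_of_nonneg_left h1χ hz.1.le
      have e3 := hz.2
      linarith
    calc ‖a z‖ ≤ M * (z * χ z * (1+z*r)^(-(1:ℝ)/2)) := h1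
      _ ≤ M * 1 := mul_le_mul_of_nonneg_left h2 hM
      _ = M := mul_one M
  have hEnorm : ∀ z : ℝ, ‖E z‖ = 1 := by
    intro z
    rw [hEdef]
    simp only [Complex.norm_exp]
    have : (-Complex.I * (t:ℂ) * ((Real.sqrt (z ^ 2 + m ^ 2) + z * r / t : ℝ) : ℂ)).re = 0 := by
      simp [Complex.mul_re, Complex.mul_im]
    rw [this, Real.exp_zero]
  have hψlow : ∀ z ∈ Set.Ioc (0:ℝ) 1, z / s1 ≤ ψ z := by
    intro z hz
    have h7 : Real.sqrt (z^2+m^2) ≤ s1 := by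
      rw [hs1def]
      apply Real.sqrt_le_sqrt
      nlinarith [hz.1, hz.2]
    have h8 : z / s1 ≤ z / Real.sqrt (z^2+m^2) :=
      div_le_div_of_nonneg_left hz.1.le (hspos z) h7
    have h9 : 0 ≤ r / t := div_nonneg hr ht.le
    rw [hψdef]; dsimp only; linarith
  have hψdnn : ∀ z : ℝ, 0 ≤ ψd z := by
    intro z
    have : (0:ℝ) ≤ m^2 / ((z^2 + m^2) * Real.sqrt (z^2 + m^2)) :=
      div_nonneg (sq_nonneg m) (mul_nonneg (hm2 z).le (Real.sqrt_nonneg _))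
    rw [hψddef]
    exact this
  have hψdub : ∀ z : ℝ, ψd z ≤ 1/m := by
    intro z
    simp only [hψddef]
    have h7 : m ≤ Real.sqrt (z^2+m^2) := by
      have h7a := Real.sqrt_le_sqrt (le_add_of_nonneg_left (sq_nonneg z) : m^2 ≤ z^2+m^2)
      rwa [Real.sqrt_sq hm.le] at h7a
    have h8 : m^2 * m ≤ (z^2+m^2) * Real.sqrt (z^2+m^2) := by
      apply mul_le_mul (le_add_of_nonneg_left (sq_nonneg z)) h7 hm.le (hm2 z).le
    calc m^2 / ((z^2+m^2) * Real.sqrt (z^2+m^2)) ≤ m^2 / (m^2*m) :=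
          div_le_div_of_nonneg_left (by positivity) (by positivity) h8
      _ = 1/m := by field_simp
  have hdnorm : ∀ z : ℝ, 0 < z → ‖(Complex.I * t * (ψ z:ℂ))‖ = t * ψ z := by
    intro z hz
    rw [norm_mul, norm_mul]
    simp only [Complex.norm_I, Complex.norm_real, Real.norm_eq_abs]
    rw [abs_of_pos ht, abs_of_pos (hψpos z hz), one_mul]
  have hdnormd : ∀ z : ℝ, ‖(Complex.I * t * (ψd z:ℂ))‖ = t * ψd z := by
    intro z
    rw [norm_mul, norm_mul]
    simp only [Complex.norm_I, Complex.norm_real, Real.norm_eq_abs]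
    rw [abs_of_pos ht, abs_of_nonneg (hψdnn z), one_mul]
  have hGdnorm : ∀ z ∈ Set.Ioc (0:ℝ) 1, ‖Gd z‖ ≤ (C2 - 1) * M / t := by
    intro z hz
    have hzp := hz.1
    have hp := hψpos z hzp
    have hpl := hψlow z hz
    have hdn := hdnorm z hzp
    have hzs1 : 0 < z / s1 := div_pos hzp hs1pos
    have htzs : 0 < t * (z / s1) := mul_pos ht hzs1
    have htψ : 0 < t * ψ z := mul_pos ht hp
    have hden : t * (z/s1) ≤ t * ψ z := mul_le_mul_of_nonneg_left hpl ht.le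
    have h1 : ‖Gd z‖ = ‖deriv a z * (Complex.I * t * (ψ z:ℂ)) - a z * (Complex.I * t * (ψd z:ℂ))‖
        / (t * ψ z)^2 := by
      simp only [hGddef]
      rw [norm_div, norm_pow, hdn]
    have h2 : ‖deriv a z * (Complex.I * t * (ψ z:ℂ)) - a z * (Complex.I * t * (ψd z:ℂ))‖
        ≤ (M*K*z) * (t * ψ z) + (M*K*z^2) * (t * ψd z) := by
      refine (norm_sub_le _ _).trans ?_
      rw [norm_mul (deriv a z) (Complex.I * t * (ψ z:ℂ)), norm_mul (a z) (Complex.I * t * (ψd z:ℂ)),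
        hdn, hdnormd]
      exact add_le_add (mul_le_mul_of_nonneg_right (hadnorm z hz) htψ.le)
        (mul_le_mul_of_nonneg_right (hanorm z hz) (mul_nonneg ht.le (hψdnn z)))
    have h3 : ((M*K*z) * (t * ψ z) + (M*K*z^2) * (t * ψd z)) / (t * ψ z)^2
        ≤ M*K*s1/t + M*K*s1^2/(m*t) := by
      rw [add_div]
      apply add_le_add
      · have e1 : (M*K*z) * (t * ψ z) / (t * ψ z)^2 = (M*K*z) / (t * ψ z) := by
          rw [sq, mul_div_mul_right _ _ htψ.ne']
        rw [e1]
        calc (M*K*z) / (t * ψ z) ≤ (M*K*z) / (t * (z/s1)) :=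
              div_le_div_of_nonneg_left (by positivity) htzs hden
          _ = M*K*s1/t := by field_simp
      · calc (M*K*z^2) * (t * ψd z) / (t * ψ z)^2
            ≤ (M*K*z^2) * (t * (1/m)) / (t * (z/s1))^2 := by
              apply div_le_div₀ (by positivity)
                (mul_le_mul_of_nonneg_left (mul_le_mul_of_nonneg_left (hψdub z) ht.le)
                  (by positivity))
                (by positivity)
                (pow_le_pow_left₀ htzs.le hden 2)
          _ = M*K*s1^2/(m*t) := by field_simp
    have h4 : M*K*s1/t + M*K*s1^2/(m*t) = (C2 - 1) * M / t := by
      rw [hC2def]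
      field_simp
      ring
    rw [h1, ← h4]
    exact le_trans (div_le_div_of_nonneg_right h2 (by positivity)) h3
  -- continuity facts
  have hsqc : Continuous fun z : ℝ => Real.sqrt (z^2 + m^2) :=
    Real.continuous_sqrt.comp (by continuity)
  have hψcont : Continuous ψ := by
    rw [hψdef]
    exact (continuous_id.div hsqc fun z => (hspos z).ne').add continuous_const
  have hEcont : Continuous E := by
    rw [hEdef]
    apply Complex.continuous_exp.comp
    exact continuous_const.mul (Complex.continuous_ofReal.comp (hsqc.add (by continuity)))
  have hacont : Continuous a := ha.continuous
  have hdacont : Continuous (deriv a) := ha.continuous_deriv le_rfl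
  have hψdcont : Continuous ψd := by
    rw [hψddef]
    exact continuous_const.div ((by continuity : Continuous fun z : ℝ => z^2 + m^2).mul hsqc)
      fun z => (mul_pos (hm2 z) (hspos z)).ne'
  have hdcont : Continuous fun z : ℝ => Complex.I * t * (ψ z : ℂ) :=
    continuous_const.mul (Complex.continuous_ofReal.comp hψcont)
  have hddcont : Continuous fun z : ℝ => Complex.I * t * (ψd z : ℂ) :=
    continuous_const.mul (Complex.continuous_ofReal.comp hψdcont)
  have hGdmeas : AEStronglyMeasurable Gd volume := by
    rw [hGddef]
    exact (((hdacont.mul hdcont).sub (hacont.mul hddcont)).measurable.div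
      ((hdcont.pow 2).measurable)).aestronglyMeasurable
  have key_int : ∀ (f : ℝ → ℂ) (B : ℝ), AEStronglyMeasurable f volume →
      (∀ z ∈ Set.Ioc (0:ℝ) 1, ‖f z‖ ≤ B) → IntervalIntegrable f volume 0 1 := by
    intro f B hf hB
    rw [intervalIntegrable_iff, Set.uIoc_of_le (by norm_num : (0:ℝ) ≤ 1)]
    apply Measure.integrableOn_of_bounded measure_Ioc_lt_top.ne hf
    exact (ae_restrict_iff' measurableSet_Ioc).mpr (ae_of_all _ hB)
  -- continuity of the antiderivative on [0,1]
  have hgcont : ContinuousOn g (Set.Ioi 0) := by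
    rw [hgdef]
    exact ContinuousOn.div hacont.continuousOn hdcont.continuousOn fun z hz => hdne z hz
  have hg0 : g 0 = 0 := by rw [hgdef]; dsimp only; rw [ha0, zero_div]
  have hg1 : g 1 = 0 := by rw [hgdef]; dsimp only; rw [ha1, zero_div]
  have hconth : ContinuousOn (fun z => E z * g z) (Set.Icc 0 1) := by
    intro x hx
    rcases eq_or_lt_of_le hx.1 with hx0 | hx0
    · subst hx0
      have hbound : ∀ z ∈ Set.Icc (0:ℝ) 1, ‖E z * g z‖ ≤ (M*K*s1/t) * z := by
        intro z hzz
        rcases eq_or_lt_of_le hzz.1 with hz0 | hz0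
        · rw [← hz0, hg0, mul_zero, norm_zero, mul_zero]
        · have hzIoc : z ∈ Set.Ioc (0:ℝ) 1 := ⟨hz0, hzz.2⟩
          rw [norm_mul, hEnorm, one_mul]
          have hge : ‖g z‖ = ‖a z‖ / (t * ψ z) := by
            rw [hgdef]; dsimp only; rw [norm_div, hdnorm z hz0]
          rw [hge]
          calc ‖a z‖ / (t * ψ z) ≤ (M*K*z^2) / (t * (z/s1)) :=
                div_le_div₀ (by positivity) (hanorm z hzIoc)
                  (mul_pos ht (div_pos hz0 hs1pos))
                  (mul_le_mul_of_nonneg_left (hψlow z hzIoc) ht.le)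
            _ = (M*K*s1/t) * z := by field_simp
      have hlin : Continuous fun z : ℝ => (M*K*s1/t) * z := continuous_const.mul continuous_id
      have htend : Filter.Tendsto (fun z : ℝ => (M*K*s1/t) * z)
          (nhdsWithin 0 (Set.Icc 0 1)) (nhds 0) := by
        simpa using (hlin.tendsto 0).mono_left nhdsWithin_le_nhds
      have htf : Filter.Tendsto (fun z => E z * g z) (nhdsWithin 0 (Set.Icc 0 1)) (nhds 0) := by
        apply squeeze_zero_norm' ?_ htend
        filter_upwards [self_mem_nhdsWithin] with z hzz using hbound z hzz
      have h00 : E 0 * g 0 = 0 := by rw [hg0, mul_zero]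
      show Filter.Tendsto (fun z => E z * g z) (nhdsWithin 0 (Set.Icc 0 1)) (nhds (E 0 * g 0))
      rw [h00]
      exact htf
    · exact (hEcont.continuousAt.mul (hgcont.continuousAt (Ioi_mem_nhds hx0))).continuousWithinAt
  -- FTC
  have hFint : IntervalIntegrable (fun z => E z * Gd z) volume 0 1 :=
    key_int _ ((C2-1)*M/t) (hEcont.aestronglyMeasurable.mul hGdmeas)
      (fun z hz => by rw [norm_mul, hEnorm, one_mul]; exact hGdnorm z hz)
  have hEaint : IntervalIntegrable (fun z => E z * a z) volume 0 1 :=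
    (hEcont.mul hacont).intervalIntegrable 0 1
  have hsubint : IntervalIntegrable (fun z => E z * Gd z - E z * a z) volume 0 1 :=
    hFint.sub hEaint
  have hFTC : ∫ z in (0:ℝ)..1, (E z * Gd z - E z * a z) = 0 := by
    rw [intervalIntegral.integral_eq_sub_of_hasDeriv_right_of_le (by norm_num) hconth
      (fun x hx => (hhder x hx.1).hasDerivWithinAt) hsubint]
    simp [hg0, hg1]
  have hsplit : ∫ z in (0:ℝ)..1, E z * a z = ∫ z in (0:ℝ)..1, E z * Gd z := by
    have h9 := intervalIntegral.integral_sub hFint hEaint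
    rw [hFTC] at h9
    exact (sub_eq_zero.mp h9.symm).symm
  have hmain : ‖∫ z in (0:ℝ)..1, E z * a z‖ ≤ (C2-1)*M/t := by
    rw [hsplit]
    have h9 : ∀ x ∈ Set.uIoc (0:ℝ) 1, ‖E x * Gd x‖ ≤ (C2-1)*M/t := by
      rw [Set.uIoc_of_le (by norm_num : (0:ℝ) ≤ 1)]
      intro x hx
      rw [norm_mul, hEnorm, one_mul]
      exact hGdnorm x hx
    have := intervalIntegral.norm_integral_le_of_norm_le_const h9
    simpa using this
  have htriv : ‖∫ z in (0:ℝ)..1, E z * a z‖ ≤ M := by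
    have h9 : ∀ x ∈ Set.uIoc (0:ℝ) 1, ‖E x * a x‖ ≤ M := by
      rw [Set.uIoc_of_le (by norm_num : (0:ℝ) ≤ 1)]
      intro x hx
      rw [norm_mul, hEnorm, one_mul]
      exact haM x hx
    have := intervalIntegral.norm_integral_le_of_norm_le_const h9
    simpa using this
  -- reduction of the integral over (0, ∞) to (0, 1]
  have hi2 : Set.EqOn (fun z => E z * a z) (fun _ => (0:ℂ)) (Set.Ioi 1) := by
    intro z hz
    dsimp only
    rw [hasupp z hz, mul_zero]
  have hIoc : IntegrableOn (fun z => E z * a z) (Set.Ioc 0 1) volume :=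
    ((hEcont.mul hacont).integrableOn_Icc).mono_set Set.Ioc_subset_Icc_self
  have hIoi1 : IntegrableOn (fun z => E z * a z) (Set.Ioi 1) volume :=
    (integrableOn_congr_fun hi2 measurableSet_Ioi).mpr (integrableOn_zero)
  have hred : (∫ z in Set.Ioi (0:ℝ), E z * a z) = ∫ z in (0:ℝ)..1, E z * a z := by
    rw [intervalIntegral.integral_of_le (by norm_num : (0:ℝ) ≤ 1)]
    rw [show Set.Ioi (0:ℝ) = Set.Ioc 0 1 ∪ Set.Ioi 1 from
      (Set.Ioc_union_Ioi_eq_Ioi (by norm_num)).symm]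
    rw [setIntegral_union (Set.Ioc_disjoint_Ioi le_rfl) measurableSet_Ioi hIoc hIoi1]
    rw [setIntegral_congr_fun measurableSet_Ioi hi2]
    simp
  -- conclusion
  have hgoal : ‖∫ z in Set.Ioi (0:ℝ), E z * a z‖ ≤ Real.sqrt 2 * C2 * M / Real.sqrt (1 + t^2) := by
    have h9 : 0 < Real.sqrt (1 + t^2) := Real.sqrt_pos.mpr (by positivity)
    rcases le_or_gt t 1 with hcase | hcase
    · have h8 : Real.sqrt (1 + t^2) ≤ Real.sqrt 2 := Real.sqrt_le_sqrt (by nlinarith)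
      calc ‖∫ z in Set.Ioi (0:ℝ), E z * a z‖ ≤ M := hred ▸ htriv
        _ ≤ Real.sqrt 2 * C2 * M / Real.sqrt (1 + t^2) := by
          rw [le_div_iff₀ h9]
          have h10 : M * Real.sqrt (1+t^2) ≤ M * Real.sqrt 2 := mul_le_mul_of_nonneg_left h8 hM
          nlinarith [mul_nonneg (mul_nonneg (sub_nonneg.mpr hC2one) (Real.sqrt_nonneg 2)) hM]
    · have h8 : Real.sqrt (1 + t^2) ≤ Real.sqrt 2 * t := by
        rw [show Real.sqrt 2 * t = Real.sqrt (2*t^2) by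
          rw [Real.sqrt_mul (by norm_num : (0:ℝ) ≤ 2), Real.sqrt_sq ht.le]]
        exact Real.sqrt_le_sqrt (by nlinarith)
      calc ‖∫ z in Set.Ioi (0:ℝ), E z * a z‖ ≤ (C2-1)*M/t := hred ▸ hmain
        _ ≤ Real.sqrt 2 * C2 * M / Real.sqrt (1 + t^2) := by
          rw [div_le_div_iff₀ ht h9]
          have h10 : (C2-1)*M*Real.sqrt (1+t^2) ≤ (C2-1)*M*(Real.sqrt 2 * t) :=
            mul_le_mul_of_nonneg_left h8 (mul_nonneg (by linarith) hM)
          nlinarith [mul_nonneg (mul_nonneg (Real.sqrt_nonneg 2) hM) ht.le]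
  rw [hEdef] at hgoal
  push_cast at hgoal
  convert hgoal using 5
end

section
/- For w ∈ ℝ², let ⟨w⟩ = (1+|w|²)^{1/2}. Then for all x, y ∈ ℝ², ∫_{ℝ²} ⟨w⟩^{−2−ε} |x−w|^{−1} |w−y|^{−1} dw ≲ 1 + log⁻|x−y|, where log⁻(r) = max(−log r, 0), with constant depending only on ε > 0. -/
/-!
Put `s = ‖x - y‖ / 2`. Since `‖w - x‖ + ‖w - y‖ ≥ 2 * s`, the larger of the two distances is at
least `s`, whence `‖x - w‖⁻¹ ‖w - y‖⁻¹ ≤ k ‖w - x‖ + k ‖w - y‖` with `k t = t⁻¹ (max s t)⁻¹`.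
Against a weight `≤ 1`, the unit ball around the centre contributes, in polar coordinates,
`2π ∫₀¹ dt / max s t ≤ 2π (1 + log s⁻¹)`; outside it `k ≤ 1`, leaving the integral of the weight.
For `x = y` the integrand is comparable to `‖w - x‖⁻²` near `x`, which is not integrable in the
plane, so the Bochner integral is `0`.
-/

open MeasureTheory Measure Metric Set Real
open scoped ENNReal

theorem lintegral_Ioo_zero_inv_eq_top {r : ℝ} (hr : 0 < r) :
    ∫⁻ t in Ioo 0 r, ENNReal.ofReal t⁻¹ = ∞ := by
  have h : ¬ IntegrableOn (·⁻¹) (Ioo 0 r) := by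
    rw [← intervalIntegrable_iff_integrableOn_Ioo_of_le hr.le (by simp) (by simp)]
    simp [hr.ne, hr.le]
  by_contra hfin
  exact h ((lintegral_ofReal_ne_top_iff_integrable (by fun_prop)
    (ae_restrict_of_forall_mem measurableSet_Ioo fun t ht => (inv_pos.2 ht.1).le)).1 hfin)

theorem lintegral_Icc_inv {a b : ℝ} (ha : 0 < a) (hab : a ≤ b) :
    ∫⁻ t in Icc a b, ENNReal.ofReal t⁻¹ = ENNReal.ofReal (log (b / a)) := by
  have hcont : ContinuousOn (·⁻¹) (Icc a b) :=
    continuousOn_inv₀.mono fun t ht => (ha.trans_le ht.1).ne'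
  rw [← ofReal_integral_eq_lintegral_ofReal (hcont.integrableOn_compact isCompact_Icc)
    (ae_restrict_of_forall_mem measurableSet_Icc fun t ht => (inv_pos.2 (ha.trans_le ht.1)).le),
    integral_Icc_eq_integral_Ioc, ← intervalIntegral.integral_of_le hab,
    integral_inv_of_pos ha (ha.trans_le hab)]

theorem lintegral_Ioo_zero_one_inv_max_le {s : ℝ} (hs : 0 < s) :
    ∫⁻ t in Ioo 0 1, ENNReal.ofReal (max s t)⁻¹ ≤ 1 + ENNReal.ofReal (log s⁻¹) := by
  rw [← lintegral_inter_add_sdiff _ (Ioo 0 1) measurableSet_Iio (B := Iio s)]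
  gcongr ?_ + ?_
  · calc ∫⁻ t in Ioo 0 1 ∩ Iio s, ENNReal.ofReal (max s t)⁻¹
        ≤ ∫⁻ t in Ioo 0 s, ENNReal.ofReal (max s t)⁻¹ :=
          lintegral_mono_set fun t ht => ⟨ht.1.1, ht.2⟩
      _ ≤ ∫⁻ _ in Ioo 0 s, ENNReal.ofReal s⁻¹ :=
          lintegral_mono fun t => ENNReal.ofReal_le_ofReal (inv_anti₀ hs (le_max_left s t))
      _ = 1 := by
          rw [setLIntegral_const, Real.volume_Ioo, sub_zero,
            ← ENNReal.ofReal_mul (inv_nonneg.2 hs.le), inv_mul_cancel₀ hs.ne', ENNReal.ofReal_one]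
  · rcases le_or_gt s 1 with hs1 | hs1
    · calc ∫⁻ t in Ioo 0 1 \ Iio s, ENNReal.ofReal (max s t)⁻¹
          ≤ ∫⁻ t in Icc s 1, ENNReal.ofReal (max s t)⁻¹ :=
            lintegral_mono_set fun t ht => ⟨not_lt.1 ht.2, ht.1.2.le⟩
        _ = ∫⁻ t in Icc s 1, ENNReal.ofReal t⁻¹ :=
            setLIntegral_congr_fun measurableSet_Icc fun t ht => by rw [max_eq_right ht.1]
        _ = ENNReal.ofReal (log s⁻¹) := by rw [lintegral_Icc_inv hs hs1, one_div]
    · have hempty : Ioo (0 : ℝ) 1 \ Iio s = ∅ :=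
        sdiff_eq_empty.2 fun t ht => ht.2.trans hs1
      simp [hempty]

theorem inv_mul_inv_le_inv_mul_inv_max_add {a b s : ℝ} (ha : 0 ≤ a) (hb : 0 ≤ b)
    (hab : 2 * s ≤ a + b) : a⁻¹ * b⁻¹ ≤ a⁻¹ * (max s a)⁻¹ + b⁻¹ * (max s b)⁻¹ := by
  wlog hle : a ≤ b generalizing a b
  · linarith [this hb ha (by linarith) (not_le.1 hle).le, mul_comm a⁻¹ b⁻¹]
  have hb_term : 0 ≤ b⁻¹ * (max s b)⁻¹ :=
    mul_nonneg (inv_nonneg.2 hb) (inv_nonneg.2 (hb.trans (le_max_right s b)))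
  rcases ha.eq_or_lt with rfl | ha
  · simpa using hb_term
  have hmax : max s a ≤ b := max_le (by linarith) hle
  calc a⁻¹ * b⁻¹ ≤ a⁻¹ * (max s a)⁻¹ := by gcongr
    _ ≤ a⁻¹ * (max s a)⁻¹ + b⁻¹ * (max s b)⁻¹ := le_add_of_nonneg_right hb_term

section Polar

variable {E : Type*} [NormedAddCommGroup E] [NormedSpace ℝ E] [Nontrivial E] [FiniteDimensional ℝ E]
  [MeasurableSpace E] [BorelSpace E] (μ : Measure E) [μ.IsAddHaarMeasure]

local notation "dim" => Module.finrank ℝ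

theorem lintegral_fun_norm_addHaar {f : ℝ → ℝ≥0∞} (hf : Measurable f) :
    ∫⁻ x, f ‖x‖ ∂μ =
      dim E * μ (ball 0 1) * ∫⁻ t in Ioi 0, ENNReal.ofReal (t ^ (dim E - 1)) * f t :=
  calc ∫⁻ x, f ‖x‖ ∂μ = ∫⁻ x : ({(0 : E)}ᶜ : Set E), f ‖(x : E)‖ ∂(μ.comap (↑)) := by
        rw [lintegral_subtype_comap (measurableSet_singleton _).compl fun x => f ‖x‖,
          restrict_compl_singleton]
    _ = ∫⁻ p, f p.2 ∂(μ.toSphere.prod (volumeIoiPow (dim E - 1))) := by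
        rw [← μ.measurePreserving_homeomorphUnitSphereProd.lintegral_comp_emb
          (Homeomorph.measurableEmbedding _) fun p => f p.2]
        simp [homeomorphUnitSphereProd_apply_snd_coe]
    _ = μ.toSphere univ * ∫⁻ t, f t ∂(volumeIoiPow (dim E - 1)) := by
        rw [lintegral_prod (fun p : sphere (0 : E) 1 × Ioi (0 : ℝ) => f p.2)
          (hf.comp (measurable_subtype_coe.comp measurable_snd)).aemeasurable]
        simp [lintegral_const, mul_comm]
    _ = _ := by
        rw [toSphere_apply_univ, volumeIoiPow,
          lintegral_withDensity_eq_lintegral_mul _ (by fun_prop)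
            (show Measurable fun t : Ioi (0 : ℝ) => f t from hf.comp measurable_subtype_coe),
          ← lintegral_subtype_comap measurableSet_Ioi
            (fun t => ENNReal.ofReal (t ^ (dim E - 1)) * f t)]
        rfl

theorem setLIntegral_ball_fun_norm_sub_addHaar {f : ℝ → ℝ≥0∞} (hf : Measurable f) (z : E) (r : ℝ) :
    ∫⁻ x in ball z r, f ‖x - z‖ ∂μ =
      dim E * μ (ball 0 1) * ∫⁻ t in Ioo 0 r, ENNReal.ofReal (t ^ (dim E - 1)) * f t := by
  have hball : ∀ x, (ball z r).indicator (fun x => f ‖x - z‖) x = (Iio r).indicator f ‖x - z‖ := by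
    classical
    intro x
    simp only [indicator_apply, mem_ball, dist_eq_norm, mem_Iio]
  rw [← lintegral_indicator measurableSet_ball]
  simp_rw [hball]
  rw [lintegral_sub_right_eq_self (fun x => (Iio r).indicator f ‖x‖),
    lintegral_fun_norm_addHaar μ (hf.indicator measurableSet_Iio), ← Iio_inter_Ioi,
    ← restrict_restrict measurableSet_Iio, ← lintegral_indicator measurableSet_Iio]
  congr 2 with t
  simp [indicator_apply]

theorem not_integrable_mul_inv_norm_sub_pow_finrank {g : E → ℝ} {z : E} (hg : ContinuousAt g z)
    (hgz : 0 < g z) : ¬ Integrable (fun x => g x * ‖x - z‖⁻¹ ^ dim E) μ := by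
  obtain ⟨r, hr, hgr⟩ : ∃ r > 0, ∀ x ∈ ball z r, g z / 2 < g x :=
    eventually_nhds_iff_ball.1 (hg.eventually (lt_mem_nhds (half_lt_self hgz)))
  obtain ⟨m, hm⟩ : ∃ m, dim E = m + 1 := Nat.exists_eq_succ_of_ne_zero Module.finrank_pos.ne'
  have hball : ∫⁻ x in ball z r, ENNReal.ofReal (‖x - z‖⁻¹ ^ dim E) ∂μ = ∞ := by
    rw [setLIntegral_ball_fun_norm_sub_addHaar μ (f := fun t => ENNReal.ofReal (t⁻¹ ^ dim E))
      (by fun_prop) z r, setLIntegral_congr_fun measurableSet_Ioo (g := fun t => ENNReal.ofReal t⁻¹)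
      fun t ht => ?_, lintegral_Ioo_zero_inv_eq_top hr]
    · exact ENNReal.mul_top (by simp [hm, (measure_ball_pos μ (0 : E) one_pos).ne'])
    · rw [← ENNReal.ofReal_mul (pow_nonneg ht.1.le _), hm, Nat.add_sub_cancel, pow_succ,
        ← mul_assoc, ← mul_pow, mul_inv_cancel₀ ht.1.ne', one_pow, one_mul]
  refine fun hint => hint.lintegral_lt_top.ne (top_le_iff.1 ?_)
  calc ∞ = ENNReal.ofReal (g z / 2) * ∫⁻ x in ball z r, ENNReal.ofReal (‖x - z‖⁻¹ ^ dim E) ∂μ := by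
        rw [hball, ENNReal.mul_top (by simpa using hgz)]
    _ = ∫⁻ x in ball z r, ENNReal.ofReal (g z / 2 * ‖x - z‖⁻¹ ^ dim E) ∂μ := by
        rw [← lintegral_const_mul' _ _ ENNReal.ofReal_ne_top]
        congr with x
        rw [ENNReal.ofReal_mul (by positivity)]
    _ ≤ ∫⁻ x in ball z r, ENNReal.ofReal (g x * ‖x - z‖⁻¹ ^ dim E) ∂μ :=
        setLIntegral_mono' measurableSet_ball fun x hx => by gcongr; exact (hgr x hx).le
    _ ≤ ∫⁻ x, ENNReal.ofReal (g x * ‖x - z‖⁻¹ ^ dim E) ∂μ := setLIntegral_le_lintegral _ _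

end Polar

theorem lintegral_mul_inv_norm_sub_mul_inv_max_le {g : EuclideanSpace ℝ (Fin 2) → ℝ}
    (hg0 : ∀ w, 0 ≤ g w) (hg1 : ∀ w, g w ≤ 1) (z : EuclideanSpace ℝ (Fin 2)) {s : ℝ} (hs : 0 < s) :
    ∫⁻ w, ENNReal.ofReal (g w * (‖w - z‖⁻¹ * (max s ‖w - z‖)⁻¹)) ≤
      ENNReal.ofReal (2 * π) * (1 + ENNReal.ofReal (log s⁻¹)) + ∫⁻ w, ENNReal.ofReal (g w) := by
  have hkernel : ∀ t : ℝ, 0 ≤ t → 0 ≤ t⁻¹ * (max s t)⁻¹ := fun t ht =>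
    mul_nonneg (inv_nonneg.2 ht) (inv_nonneg.2 (ht.trans (le_max_right s t)))
  rw [← lintegral_add_compl _ (measurableSet_ball (x := z) (ε := 1))]
  gcongr ?_ + ?_
  · calc ∫⁻ w in ball z 1, ENNReal.ofReal (g w * (‖w - z‖⁻¹ * (max s ‖w - z‖)⁻¹))
        ≤ ∫⁻ w in ball z 1, ENNReal.ofReal (‖w - z‖⁻¹ * (max s ‖w - z‖)⁻¹) :=
          lintegral_mono fun w => ENNReal.ofReal_le_ofReal
            (mul_le_of_le_one_left (hkernel _ (norm_nonneg _)) (hg1 w))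
      _ = ENNReal.ofReal (2 * π) * ∫⁻ t in Ioo 0 1, ENNReal.ofReal (max s t)⁻¹ := by
          rw [setLIntegral_ball_fun_norm_sub_addHaar volume
            (f := fun t => ENNReal.ofReal (t⁻¹ * (max s t)⁻¹)) (by fun_prop)]
          simp only [finrank_euclideanSpace_fin, EuclideanSpace.volume_ball_fin_two]
          congr 1
          · simp [ENNReal.ofReal_mul zero_le_two]
          · refine setLIntegral_congr_fun measurableSet_Ioo fun t ht => ?_
            rw [Nat.add_one_sub_one, pow_one, ← ENNReal.ofReal_mul ht.1.le, ← mul_assoc,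
              mul_inv_cancel₀ ht.1.ne', one_mul]
      _ ≤ ENNReal.ofReal (2 * π) * (1 + ENNReal.ofReal (log s⁻¹)) := by
          gcongr
          exact lintegral_Ioo_zero_one_inv_max_le hs
  · calc ∫⁻ w in (ball z 1)ᶜ, ENNReal.ofReal (g w * (‖w - z‖⁻¹ * (max s ‖w - z‖)⁻¹))
        ≤ ∫⁻ w in (ball z 1)ᶜ, ENNReal.ofReal (g w) := by
          refine setLIntegral_mono' measurableSet_ball.compl fun w hw => ?_
          have hw : 1 ≤ ‖w - z‖ := by simpa [dist_eq_norm] using hw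
          refine ENNReal.ofReal_le_ofReal (mul_le_of_le_one_right (hg0 w) ?_)
          exact mul_le_one₀ (inv_le_one_of_one_le₀ hw) (inv_nonneg.2 (by positivity))
            (inv_le_one_of_one_le₀ (hw.trans (le_max_right s _)))
      _ ≤ ∫⁻ w, ENNReal.ofReal (g w) := setLIntegral_le_lintegral _ _

theorem lintegral_mul_inv_norm_sub_mul_inv_norm_sub_le {g : EuclideanSpace ℝ (Fin 2) → ℝ}
    (hgm : Measurable g) (hg0 : ∀ w, 0 ≤ g w) (hg1 : ∀ w, g w ≤ 1)
    {x y : EuclideanSpace ℝ (Fin 2)} (hxy : x ≠ y) :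
    ∫⁻ w, ENNReal.ofReal (g w * ‖x - w‖⁻¹ * ‖w - y‖⁻¹) ≤
      2 * (ENNReal.ofReal (2 * π) * (1 + ENNReal.ofReal (log (2 / ‖x - y‖))) +
        ∫⁻ w, ENNReal.ofReal (g w)) := by
  set s := ‖x - y‖ / 2
  have hs : 0 < s := half_pos (norm_pos_iff.2 (sub_ne_zero.2 hxy))
  let K : EuclideanSpace ℝ (Fin 2) → EuclideanSpace ℝ (Fin 2) → ℝ :=
    fun z w => g w * (‖w - z‖⁻¹ * (max s ‖w - z‖)⁻¹)
  have hK : ∀ z w, 0 ≤ K z w := fun z w =>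
    mul_nonneg (hg0 w) (mul_nonneg (inv_nonneg.2 (norm_nonneg _))
      (inv_nonneg.2 ((norm_nonneg _).trans (le_max_right _ _))))
  rw [← inv_div]
  calc ∫⁻ w, ENNReal.ofReal (g w * ‖x - w‖⁻¹ * ‖w - y‖⁻¹)
      ≤ ∫⁻ w, (ENNReal.ofReal (K x w) + ENNReal.ofReal (K y w)) := by
        refine lintegral_mono fun w => ?_
        rw [← ENNReal.ofReal_add (hK x w) (hK y w), mul_assoc, norm_sub_rev x w]
        refine ENNReal.ofReal_le_ofReal (mul_add (g w) _ _ ▸ mul_le_mul_of_nonneg_left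
          (inv_mul_inv_le_inv_mul_inv_max_add (norm_nonneg _) (norm_nonneg _) ?_) (hg0 w))
        calc 2 * s = ‖x - y‖ := by ring
          _ ≤ ‖w - x‖ + ‖w - y‖ := by
            rw [norm_sub_rev w x]; exact norm_sub_le_norm_sub_add_norm_sub x w y
    _ = (∫⁻ w, ENNReal.ofReal (K x w)) + ∫⁻ w, ENNReal.ofReal (K y w) :=
        lintegral_add_left (by simp only [K]; fun_prop) _
    _ ≤ 2 * (ENNReal.ofReal (2 * π) * (1 + ENNReal.ofReal (log s⁻¹)) +
        ∫⁻ w, ENNReal.ofReal (g w)) := by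
      rw [two_mul]
      exact add_le_add (lintegral_mul_inv_norm_sub_mul_inv_max_le hg0 hg1 x hs)
        (lintegral_mul_inv_norm_sub_mul_inv_max_le hg0 hg1 y hs)

theorem integral_mul_inv_norm_sub_mul_inv_norm_sub_le {g : EuclideanSpace ℝ (Fin 2) → ℝ}
    (hgm : Measurable g) (hg0 : ∀ w, 0 ≤ g w) (hg1 : ∀ w, g w ≤ 1) (hgi : Integrable g)
    {x y : EuclideanSpace ℝ (Fin 2)} (hxy : x ≠ y) :
    ∫ w, g w * ‖x - w‖⁻¹ * ‖w - y‖⁻¹ ≤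
      2 * (2 * π * (1 + (log 2 + max (-log ‖x - y‖) 0)) + ∫ w, g w) := by
  have hlog : log (2 / ‖x - y‖) ≤ log 2 + max (-log ‖x - y‖) 0 := by
    rw [log_div two_ne_zero (norm_pos_iff.2 (sub_ne_zero.2 hxy)).ne']
    linarith [le_max_left (-log ‖x - y‖) 0]
  have hnonneg : 0 ≤ log 2 + max (-log ‖x - y‖) 0 :=
    add_nonneg (log_nonneg one_le_two) (le_max_right _ _)
  have hgi_nonneg : 0 ≤ ∫ w, g w := integral_nonneg hg0
  rw [integral_eq_lintegral_of_nonneg_ae (.of_forall fun w => by have := hg0 w; positivity)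
    (by fun_prop)]
  refine ENNReal.toReal_le_of_le_ofReal (by positivity) ?_
  calc _ ≤ 2 * (ENNReal.ofReal (2 * π) * (1 + ENNReal.ofReal (log (2 / ‖x - y‖))) +
          ∫⁻ w, ENNReal.ofReal (g w)) :=
        lintegral_mul_inv_norm_sub_mul_inv_norm_sub_le hgm hg0 hg1 hxy
    _ ≤ 2 * (ENNReal.ofReal (2 * π) * (1 + ENNReal.ofReal (log 2 + max (-log ‖x - y‖) 0)) +
          ENNReal.ofReal (∫ w, g w)) := by
        rw [ofReal_integral_eq_lintegral_ofReal hgi (.of_forall hg0)]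
        gcongr
    _ = _ := by
        conv_rhs => rw [ENNReal.ofReal_mul zero_le_two, ENNReal.ofReal_add (by positivity)
          hgi_nonneg, ENNReal.ofReal_mul (by positivity), ENNReal.ofReal_add zero_le_one hnonneg,
          ENNReal.ofReal_one, ENNReal.ofReal_ofNat]

/-- The borderline (k = ℓ = 1, n = 2) two-singularity estimate:
    ∫_{ℝ²} ⟨w⟩^{−2−ε} |x−w|⁻¹ |w−y|⁻¹ dw ≲ 1 + log⁻|x−y|. -/
theorem two_singularity_log_estimate (ε : ℝ) (hε : 0 < ε) :
    ∃ C : ℝ, 0 < C ∧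
      ∀ x y : EuclideanSpace ℝ (Fin 2),
        (∫ w : EuclideanSpace ℝ (Fin 2),
            (1 + ‖w‖ ^ 2) ^ (-(2 + ε) / 2) * ‖x - w‖⁻¹ * ‖w - y‖⁻¹)
          ≤ C * (1 + max (-Real.log ‖x - y‖) 0) := by
  set K : EuclideanSpace ℝ (Fin 2) → ℝ := fun w => (1 + ‖w‖ ^ 2) ^ (-(2 + ε) / 2)
  have hK_pos : ∀ w, 0 < K w := fun w => by positivity
  have hK_le_one : ∀ w, K w ≤ 1 := fun w =>
    rpow_le_one_of_one_le_of_nonpos (by nlinarith [sq_nonneg ‖w‖]) (by linarith)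
  have hK_cont : Continuous K :=
    (by fun_prop : Continuous fun w : EuclideanSpace ℝ (Fin 2) => 1 + ‖w‖ ^ 2).rpow_const
      fun w => .inl (by positivity)
  have hK_int : Integrable K := integrable_rpow_neg_one_add_norm_sq (by simp; linarith)
  have hT : 0 ≤ ∫ w, K w := integral_nonneg fun w => (hK_pos w).le
  have hlog2 : 0 ≤ log 2 := log_nonneg one_le_two
  refine ⟨2 * (2 * π * (1 + log 2) + ∫ w, K w), by positivity, fun x y => ?_⟩
  have hm : 0 ≤ max (-log ‖x - y‖) 0 := le_max_right _ _
  rcases eq_or_ne x y with rfl | hxy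
  · have hdiv := not_integrable_mul_inv_norm_sub_pow_finrank (μ := volume) hK_cont.continuousAt
      (hK_pos x)
    rw [integral_undef fun hint => hdiv (hint.congr (.of_forall fun w => ?_))]
    · positivity
    · simp [K, norm_sub_rev x w, sq, mul_assoc]
  · calc _ ≤ 2 * (2 * π * (1 + (log 2 + max (-log ‖x - y‖) 0)) + ∫ w, K w) :=
          integral_mul_inv_norm_sub_mul_inv_norm_sub_le hK_cont.measurable (fun w => (hK_pos w).le)
            hK_le_one hK_int hxy
      _ ≤ _ := by
          nlinarith [mul_nonneg hm (mul_nonneg pi_pos.le hlog2), mul_nonneg hm hT]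
end
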